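/- arXiv:1812.03695 — 11 statements merged into one kernel-verified Lean document; each statement's English description precedes it below -/
import Mathlib

section
/- Let α,β,γ,δ be pairwise distinct reals and let t_S ∈ ℝ be arbitrary reals given for every subset S ⊆ {α,β,γ,δ}. If f(β,γ,δ;∅) = 0, f(α,γ,δ;∅) = 0, f(α,β,δ;∅) = 0, f(α,β,γ;{δ}) = 0, and t_{{δ}} ≠ 0, then t_∅·t_{{α,β,γ,δ}} = Γ_{{α,δ},{β,γ}}·t_{{α,δ}}·t_{{β,γ}} + Γ_{{β,δ},{α,γ}}·t_{{β,δ}}·t_{{α,γ}} + Γ_{{γ,δ},{α,β}}·t_{{γ,δ}}·t_{{α,β}}; that is, every solution of the Miwa (discrete BKP) equation solves the second equation of the discrete BKP hierarchy. -/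
noncomputable section

/-- The Miwa expression
`f(ξ,η,ζ;S) = Γ_{ξ,{η,ζ}} t_{S∪{ξ}} t_{S∪{η,ζ}} + Γ_{η,{ξ,ζ}} t_{S∪{η}} t_{S∪{ξ,ζ}}
  + Γ_{ζ,{ξ,η}} t_{S∪{ζ}} t_{S∪{ξ,η}} − t_S t_{S∪{ξ,η,ζ}}`. -/
def miwaF (t : Finset ℝ → ℝ) (ξ η ζ : ℝ) (S : Finset ℝ) : ℝ :=
  ((ξ + η) / (ξ - η)) * ((ξ + ζ) / (ξ - ζ)) * t (S ∪ {ξ}) * t (S ∪ {η, ζ}) +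
  ((η + ξ) / (η - ξ)) * ((η + ζ) / (η - ζ)) * t (S ∪ {η}) * t (S ∪ {ξ, ζ}) +
  ((ζ + ξ) / (ζ - ξ)) * ((ζ + η) / (ζ - η)) * t (S ∪ {ζ}) * t (S ∪ {ξ, η}) -
  t S * t (S ∪ {ξ, η, ζ})

set_option maxHeartbeats 2000000 in
theorem miwa_implies_second_discrete_BKP
    (α β γ δ : ℝ)
    (hαβ : α ≠ β) (hαγ : α ≠ γ) (hαδ : α ≠ δ)
    (hβγ : β ≠ γ) (hβδ : β ≠ δ) (hγδ : γ ≠ δ)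
    (t : Finset ℝ → ℝ)
    (h1 : miwaF t β γ δ ∅ = 0)
    (h2 : miwaF t α γ δ ∅ = 0)
    (h3 : miwaF t α β δ ∅ = 0)
    (h4 : miwaF t α β γ {δ} = 0)
    (htδ : t {δ} ≠ 0) :
    t ∅ * t {α, β, γ, δ} =
      ((α + β) / (α - β)) * ((α + γ) / (α - γ)) *
        ((δ + β) / (δ - β)) * ((δ + γ) / (δ - γ)) * t {α, δ} * t {β, γ} +
      ((β + α) / (β - α)) * ((β + γ) / (β - γ)) *
        ((δ + α) / (δ - α)) * ((δ + γ) / (δ - γ)) * t {β, δ} * t {α, γ} +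
      ((γ + α) / (γ - α)) * ((γ + β) / (γ - β)) *
        ((δ + α) / (δ - α)) * ((δ + β) / (δ - β)) * t {γ, δ} * t {α, β} := by
  have hαβ' : α - β ≠ 0 := sub_ne_zero.mpr hαβ
  have hαγ' : α - γ ≠ 0 := sub_ne_zero.mpr hαγ
  have hαδ' : α - δ ≠ 0 := sub_ne_zero.mpr hαδ
  have hβγ' : β - γ ≠ 0 := sub_ne_zero.mpr hβγ
  have hβδ' : β - δ ≠ 0 := sub_ne_zero.mpr hβδ
  have hγδ' : γ - δ ≠ 0 := sub_ne_zero.mpr hγδ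
  have hβα' : β - α ≠ 0 := sub_ne_zero.mpr hαβ.symm
  have hγα' : γ - α ≠ 0 := sub_ne_zero.mpr hαγ.symm
  have hδα' : δ - α ≠ 0 := sub_ne_zero.mpr hαδ.symm
  have hγβ' : γ - β ≠ 0 := sub_ne_zero.mpr hβγ.symm
  have hδβ' : δ - β ≠ 0 := sub_ne_zero.mpr hβδ.symm
  have hδγ' : δ - γ ≠ 0 := sub_ne_zero.mpr hγδ.symm
  have e1 : ({δ} : Finset ℝ) ∪ {α} = {α, δ} := by ext x; simp; tauto
  have e2 : ({δ} : Finset ℝ) ∪ {β, γ} = {β, γ, δ} := by ext x; simp; tauto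
  have e3 : ({δ} : Finset ℝ) ∪ {β} = {β, δ} := by ext x; simp; tauto
  have e4 : ({δ} : Finset ℝ) ∪ {α, γ} = {α, γ, δ} := by ext x; simp; tauto
  have e5 : ({δ} : Finset ℝ) ∪ {γ} = {γ, δ} := by ext x; simp; tauto
  have e6 : ({δ} : Finset ℝ) ∪ {α, β} = {α, β, δ} := by ext x; simp; tauto
  have e7 : ({δ} : Finset ℝ) ∪ {α, β, γ} = {α, β, γ, δ} := by ext x; simp; tauto
  unfold miwaF at h1 h2 h3 h4
  simp only [Finset.empty_union, e1, e2, e3, e4, e5, e6, e7] at h1 h2 h3 h4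
  have P1 : (β+γ)*(β+δ)*(γ-δ)*t {β}*t {γ,δ} - (γ+β)*(γ+δ)*(β-δ)*t {γ}*t {β,δ}
      + (δ+β)*(δ+γ)*(β-γ)*t {δ}*t {β,γ} - (β-γ)*(β-δ)*(γ-δ)*t ∅*t {β,γ,δ} = 0 := by
    linear_combination (norm := (field_simp; ring)) ((β-γ)*(β-δ)*(γ-δ)) * h1
  have P2 : (α+γ)*(α+δ)*(γ-δ)*t {α}*t {γ,δ} - (γ+α)*(γ+δ)*(α-δ)*t {γ}*t {α,δ}
      + (δ+α)*(δ+γ)*(α-γ)*t {δ}*t {α,γ} - (α-γ)*(α-δ)*(γ-δ)*t ∅*t {α,γ,δ} = 0 := by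
    linear_combination (norm := (field_simp; ring)) ((α-γ)*(α-δ)*(γ-δ)) * h2
  have P3 : (α+β)*(α+δ)*(β-δ)*t {α}*t {β,δ} - (β+α)*(β+δ)*(α-δ)*t {β}*t {α,δ}
      + (δ+α)*(δ+β)*(α-β)*t {δ}*t {α,β} - (α-β)*(α-δ)*(β-δ)*t ∅*t {α,β,δ} = 0 := by
    linear_combination (norm := (field_simp; ring)) ((α-β)*(α-δ)*(β-δ)) * h3
  have P4 : (α+β)*(α+γ)*(β-γ)*t {α,δ}*t {β,γ,δ} - (β+α)*(β+γ)*(α-γ)*t {β,δ}*t {α,γ,δ}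
      + (γ+α)*(γ+β)*(α-β)*t {γ,δ}*t {α,β,δ} - (α-β)*(α-γ)*(β-γ)*t {δ}*t {α,β,γ,δ} = 0 := by
    linear_combination (norm := (field_simp; ring)) ((α-β)*(α-γ)*(β-γ)) * h4
  have hD : ((α-β)*(α-γ)*(β-γ)*(δ-α)*(δ-β)*(δ-γ)) ≠ 0 :=
    mul_ne_zero (mul_ne_zero (mul_ne_zero (mul_ne_zero (mul_ne_zero hαβ' hαγ') hβγ') hδα') hδβ') hδγ'
  have key : t {δ} * (((α-β)*(α-γ)*(β-γ)*(δ-α)*(δ-β)*(δ-γ)) * (t ∅ * t {α, β, γ, δ})) =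
      t {δ} * ((α+β)*(α+γ)*(δ+β)*(δ+γ)*(β-γ)*(δ-α)*t {α,δ}*t {β,γ}
        - (β+α)*(β+γ)*(δ+α)*(δ+γ)*(α-γ)*(δ-β)*t {β,δ}*t {α,γ}
        + (γ+α)*(γ+β)*(δ+α)*(δ+β)*(α-β)*(δ-γ)*t {γ,δ}*t {α,β}) := by
    linear_combination (-(t ∅)*(δ-α)*(δ-β)*(δ-γ))*P4 + (-((α+β)*(α+γ)*(δ-α))*t {α,δ})*P1
      + ((β+α)*(β+γ)*(δ-β)*t {β,δ})*P2 + (-((γ+α)*(γ+β)*(δ-γ))*t {γ,δ})*P3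
  have r1 : ((α-β)*(α-γ)*(β-γ)*(δ-α)*(δ-β)*(δ-γ)) *
      (((α + β) / (α - β)) * ((α + γ) / (α - γ)) *
        ((δ + β) / (δ - β)) * ((δ + γ) / (δ - γ)) * t {α, δ} * t {β, γ}) =
      (α+β)*(α+γ)*(δ+β)*(δ+γ)*(β-γ)*(δ-α)*t {α,δ}*t {β,γ} := by
    field_simp
  have r2 : ((α-β)*(α-γ)*(β-γ)*(δ-α)*(δ-β)*(δ-γ)) *
      (((β + α) / (β - α)) * ((β + γ) / (β - γ)) *
        ((δ + α) / (δ - α)) * ((δ + γ) / (δ - γ)) * t {β, δ} * t {α, γ}) =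
      -((β+α)*(β+γ)*(δ+α)*(δ+γ)*(α-γ)*(δ-β)*t {β,δ}*t {α,γ}) := by
    field_simp; ring
  have r3 : ((α-β)*(α-γ)*(β-γ)*(δ-α)*(δ-β)*(δ-γ)) *
      (((γ + α) / (γ - α)) * ((γ + β) / (γ - β)) *
        ((δ + α) / (δ - α)) * ((δ + β) / (δ - β)) * t {γ, δ} * t {α, β}) =
      (γ+α)*(γ+β)*(δ+α)*(δ+β)*(α-β)*(δ-γ)*t {γ,δ}*t {α,β} := by
    field_simp; ring
  have hR : t {δ} * (((α-β)*(α-γ)*(β-γ)*(δ-α)*(δ-β)*(δ-γ)) *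
      (((α + β) / (α - β)) * ((α + γ) / (α - γ)) *
        ((δ + β) / (δ - β)) * ((δ + γ) / (δ - γ)) * t {α, δ} * t {β, γ} +
      ((β + α) / (β - α)) * ((β + γ) / (β - γ)) *
        ((δ + α) / (δ - α)) * ((δ + γ) / (δ - γ)) * t {β, δ} * t {α, γ} +
      ((γ + α) / (γ - α)) * ((γ + β) / (γ - β)) *
        ((δ + α) / (δ - α)) * ((δ + β) / (δ - β)) * t {γ, δ} * t {α, β})) =
      t {δ} * ((α+β)*(α+γ)*(δ+β)*(δ+γ)*(β-γ)*(δ-α)*t {α,δ}*t {β,γ}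
        - (β+α)*(β+γ)*(δ+α)*(δ+γ)*(α-γ)*(δ-β)*t {β,δ}*t {α,γ}
        + (γ+α)*(γ+β)*(δ+α)*(δ+β)*(α-β)*(δ-γ)*t {γ,δ}*t {α,β}) := by
    linear_combination t {δ} * r1 + t {δ} * r2 + t {δ} * r3
  exact mul_left_cancel₀ hD (mul_left_cancel₀ htδ (key.trans hR.symm))

end
end

section
/- Let α,β,γ,δ be pairwise distinct reals and let t_S ∈ ℝ be arbitrary reals given for every subset S ⊆ {α,β,γ,δ}. Then the following algebraic identity holds: t_{{δ}}·[Γ_{{α,δ},{β,γ}}·t_{{α,δ}}·t_{{β,γ}} + Γ_{{β,δ},{α,γ}}·t_{{β,δ}}·t_{{α,γ}} + Γ_{{γ,δ},{α,β}}·t_{{γ,δ}}·t_{{α,β}} − t_∅·t_{{α,β,γ,δ}}] = Γ_{α,{β,γ}}·t_{{α,δ}}·f(β,γ,δ;∅) + Γ_{β,{α,γ}}·t_{{β,δ}}·f(α,γ,δ;∅) + Γ_{γ,{α,β}}·t_{{γ,δ}}·f(α,β,δ;∅) + t_∅·f(α,β,γ;{δ}). -/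
noncomputable section

private lemma rev (x y : ℝ) : (y + x) / (y - x) = -((x + y) / (x - y)) := by
  rw [← neg_sub x y, div_neg, add_comm]

theorem second_BKP_as_combination_of_Miwa
    (α β γ δ : ℝ)
    (hαβ : α ≠ β) (hαγ : α ≠ γ) (hαδ : α ≠ δ)
    (hβγ : β ≠ γ) (hβδ : β ≠ δ) (hγδ : γ ≠ δ)
    (t : Finset ℝ → ℝ) :
    t {δ} *
      (((α + β) / (α - β)) * ((α + γ) / (α - γ)) *
          ((δ + β) / (δ - β)) * ((δ + γ) / (δ - γ)) * t {α, δ} * t {β, γ} +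
        ((β + α) / (β - α)) * ((β + γ) / (β - γ)) *
          ((δ + α) / (δ - α)) * ((δ + γ) / (δ - γ)) * t {β, δ} * t {α, γ} +
        ((γ + α) / (γ - α)) * ((γ + β) / (γ - β)) *
          ((δ + α) / (δ - α)) * ((δ + β) / (δ - β)) * t {γ, δ} * t {α, β} -
        t ∅ * t {α, β, γ, δ}) =
      ((α + β) / (α - β)) * ((α + γ) / (α - γ)) * t {α, δ} * miwaF t β γ δ ∅ +
      ((β + α) / (β - α)) * ((β + γ) / (β - γ)) * t {β, δ} * miwaF t α γ δ ∅ +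
      ((γ + α) / (γ - α)) * ((γ + β) / (γ - β)) * t {γ, δ} * miwaF t α β δ ∅ +
      t ∅ * miwaF t α β γ {δ} := by
  have e1 : ({δ} ∪ {α} : Finset ℝ) = {α, δ} := by ext x; simp [or_comm]
  have e2 : ({δ} ∪ {β} : Finset ℝ) = {β, δ} := by ext x; simp [or_comm]
  have e3 : ({δ} ∪ {γ} : Finset ℝ) = {γ, δ} := by ext x; simp [or_comm]
  have e4 : ({δ} ∪ {α, β} : Finset ℝ) = {α, β, δ} := by ext x; simp; tauto
  have e5 : ({δ} ∪ {α, γ} : Finset ℝ) = {α, γ, δ} := by ext x; simp; tauto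
  have e6 : ({δ} ∪ {β, γ} : Finset ℝ) = {β, γ, δ} := by ext x; simp; tauto
  have e7 : ({δ} ∪ {α, β, γ} : Finset ℝ) = {α, β, γ, δ} := by ext x; simp; tauto
  simp only [miwaF, Finset.empty_union, e1, e2, e3, e4, e5, e6, e7,
    rev α β, rev α γ, rev α δ, rev β γ, rev β δ, rev γ δ]
  ring

end
end

section
/- For every ζ ∈ ℝ with m_k ≠ −ζ and m̄_k ≠ ζ for all k, the rank-one shift identity holds: A·H_ζ·Ā·H̄_ζ − A·Ā = 2ζ·A·(M+ζ)⁻¹·|ᾱ⟩⟨ā|·(M̄−ζ)⁻¹. -/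
open Matrix

noncomputable section

/-- `H_ζ = (M - ζ)(M + ζ)⁻¹` for `M = diag(m)`. -/
def Hmat {N : ℕ} (m : Fin N → ℝ) (ζ : ℝ) : Matrix (Fin N) (Fin N) ℝ :=
  (Matrix.diagonal m - ζ • 1) * (Matrix.diagonal m + ζ • 1)⁻¹

/-- `H̄_ζ = (M̄ + ζ)(M̄ - ζ)⁻¹` for `M̄ = diag(m̄)`. -/
def Hbmat {N : ℕ} (mb : Fin N → ℝ) (ζ : ℝ) : Matrix (Fin N) (Fin N) ℝ :=
  (Matrix.diagonal mb + ζ • 1) * (Matrix.diagonal mb - ζ • 1)⁻¹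

/-- The row `⟨b_ξ| = ⟨ā|(M̄ - ξ)⁻¹`. -/
def rowB {N : ℕ} (mb ab : Fin N → ℝ) (ξ : ℝ) : Fin N → ℝ :=
  Matrix.vecMul ab (Matrix.diagonal mb - ξ • 1)⁻¹

/-- The column `|β̄_η⟩ = (M + η)⁻¹|ᾱ⟩`. -/
def colBb {N : ℕ} (m αb : Fin N → ℝ) (η : ℝ) : Fin N → ℝ :=
  Matrix.mulVec (Matrix.diagonal m + η • 1)⁻¹ αb

/-- The scalar `E_{ξη} = 1 + (ξ+η)·⟨b_ξ|·G·A·|β̄_η⟩` with `G = (1 + A·Ā)⁻¹`. -/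
def Efun {N : ℕ} (m mb αb ab : Fin N → ℝ) (A Ab : Matrix (Fin N) (Fin N) ℝ)
    (ξ η : ℝ) : ℝ :=
  1 + (ξ + η) *
    (rowB mb ab ξ ⬝ᵥ
      Matrix.mulVec (((1 : Matrix (Fin N) (Fin N) ℝ) + A * Ab)⁻¹ * A) (colBb m αb η))

theorem rank_one_shift_identity
    {N : ℕ} (hN : 1 ≤ N) (m mb : Fin N → ℝ)
    (αv αb av ab : Fin N → ℝ)
    (A Ab : Matrix (Fin N) (Fin N) ℝ)
    (hA : Matrix.diagonal mb * A - A * Matrix.diagonal m = Matrix.vecMulVec αv av)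
    (hAb : Matrix.diagonal m * Ab - Ab * Matrix.diagonal mb = Matrix.vecMulVec αb ab)
    (ζ : ℝ) (hm : ∀ k, m k ≠ -ζ) (hmb : ∀ k, mb k ≠ ζ) :
    A * Hmat m ζ * Ab * Hbmat mb ζ - A * Ab =
      (2 * ζ) • (A * (Matrix.diagonal m + ζ • 1)⁻¹ * Matrix.vecMulVec αb ab *
        (Matrix.diagonal mb - ζ • 1)⁻¹) := by
  have hsm : (ζ • (1 : Matrix (Fin N) (Fin N) ℝ)) = Matrix.diagonal (fun _ => ζ) := by
    ext i j
    rcases eq_or_ne i j with h | h <;> simp [Matrix.one_apply, Matrix.diagonal, h]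
  have hm' : ∀ k, m k + ζ ≠ 0 := fun k h => hm k (by linarith)
  have hmb' : ∀ k, mb k - ζ ≠ 0 := fun k h => hmb k (by linarith)
  set P : Matrix (Fin N) (Fin N) ℝ := Matrix.diagonal (fun k => m k + ζ) with hPdef
  set Pi : Matrix (Fin N) (Fin N) ℝ := Matrix.diagonal (fun k => (m k + ζ)⁻¹) with hPidef
  set Q : Matrix (Fin N) (Fin N) ℝ := Matrix.diagonal (fun k => mb k - ζ) with hQdef
  set Qi : Matrix (Fin N) (Fin N) ℝ := Matrix.diagonal (fun k => (mb k - ζ)⁻¹) with hQidef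
  have hP : Matrix.diagonal m + ζ • 1 = P := by
    rw [hsm, Matrix.diagonal_add]
  have hQ : Matrix.diagonal mb - ζ • 1 = Q := by
    rw [hsm, Matrix.diagonal_sub]
  have hPPi : P * Pi = 1 := by
    rw [hPdef, hPidef, Matrix.diagonal_mul_diagonal]
    have e : (fun i => (m i + ζ) * (m i + ζ)⁻¹) = fun _ => (1:ℝ) :=
      funext fun k => mul_inv_cancel₀ (hm' k)
    rw [e]; exact Matrix.diagonal_one
  have hPiP : Pi * P = 1 := by
    rw [hPdef, hPidef, Matrix.diagonal_mul_diagonal]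
    have e : (fun i => (m i + ζ)⁻¹ * (m i + ζ)) = fun _ => (1:ℝ) :=
      funext fun k => inv_mul_cancel₀ (hm' k)
    rw [e]; exact Matrix.diagonal_one
  have hQQi : Q * Qi = 1 := by
    rw [hQdef, hQidef, Matrix.diagonal_mul_diagonal]
    have e : (fun i => (mb i - ζ) * (mb i - ζ)⁻¹) = fun _ => (1:ℝ) :=
      funext fun k => mul_inv_cancel₀ (hmb' k)
    rw [e]; exact Matrix.diagonal_one
  have hPinv : (Matrix.diagonal m + ζ • 1)⁻¹ = Pi := by
    rw [hP]; exact Matrix.inv_eq_right_inv hPPi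
  have hQinv : (Matrix.diagonal mb - ζ • 1)⁻¹ = Qi := by
    rw [hQ]; exact Matrix.inv_eq_right_inv hQQi
  have hDm : Matrix.diagonal m - ζ • 1 = Matrix.diagonal (fun k => m k - ζ) := by
    rw [hsm, Matrix.diagonal_sub]
  have hDmb : Matrix.diagonal mb + ζ • 1 = Matrix.diagonal (fun k => mb k + ζ) := by
    rw [hsm, Matrix.diagonal_add]
  have key : Matrix.diagonal (fun k => m k - ζ) * Ab * Matrix.diagonal (fun k => mb k + ζ)
      - P * Ab * Q = (2 * ζ) • Matrix.vecMulVec αb ab := by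
    rw [← hAb]
    ext i j
    simp [Matrix.mul_apply, Matrix.diagonal, Matrix.sub_apply, Matrix.smul_apply,
      Finset.mul_sum, Finset.sum_mul, hPdef, hQdef]
    ring
  have comm1 : Matrix.diagonal (fun k => m k - ζ) * Pi = Pi * Matrix.diagonal (fun k => m k - ζ) := by
    rw [hPidef, Matrix.diagonal_mul_diagonal, Matrix.diagonal_mul_diagonal]
    have e : (fun i => (m i - ζ) * (m i + ζ)⁻¹) = fun i => (m i + ζ)⁻¹ * (m i - ζ) :=
      funext fun k => by ring
    rw [e]
  have comm2 : Matrix.diagonal (fun k => mb k + ζ) * Qi = Qi * Matrix.diagonal (fun k => mb k + ζ) := by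
    rw [hQidef, Matrix.diagonal_mul_diagonal, Matrix.diagonal_mul_diagonal]
    have e : (fun i => (mb i + ζ) * (mb i - ζ)⁻¹) = fun i => (mb i - ζ)⁻¹ * (mb i + ζ) :=
      funext fun k => by ring
    rw [e]
  rw [Hmat, Hbmat, hPinv, hQinv, hDm, hDmb]
  calc A * (Matrix.diagonal (fun k => m k - ζ) * Pi) * Ab *
        (Matrix.diagonal (fun k => mb k + ζ) * Qi) - A * Ab
      = A * Pi * (Matrix.diagonal (fun k => m k - ζ) * Ab * Matrix.diagonal (fun k => mb k + ζ)
          - P * Ab * Q) * Qi := by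
        rw [comm1]
        rw [Matrix.mul_sub, Matrix.sub_mul]
        congr 1
        · simp only [Matrix.mul_assoc]
        · calc A * Ab = A * (Pi * P) * Ab * (Q * Qi) := by rw [hPiP, hQQi]; simp
            _ = A * Pi * (P * Ab * Q) * Qi := by simp only [Matrix.mul_assoc]
    _ = (2 * ζ) • (A * Pi * Matrix.vecMulVec αb ab * Qi) := by
        rw [key, Matrix.mul_smul, Matrix.smul_mul]

end
end

section
/- For every ζ ∈ ℝ with m_k ≠ −ζ and m̄_k ≠ ζ for all k, if 1 + A·Ā is invertible then det(1 + A·H_ζ·Ā·H̄_ζ) = E_{ζζ}·det(1 + A·Ā), where E_{ζζ} = 1 + 2ζ·⟨b_ζ|·G·A·|β̄_ζ⟩. -/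
/-!
Writing `P = M + ζ` and `Q = M̄ - ζ`, the Cayley factors are `H_ζ = 1 - 2ζ P⁻¹` and
`H̄_ζ = 1 + 2ζ Q⁻¹`, so the Sylvester equation for `Ā`, rewritten as `P Ā - Ā Q - 2ζ Ā = |ᾱ⟩⟨ā|`,
turns `H_ζ Ā H̄_ζ` into the rank-one update `Ā + 2ζ |β̄_ζ⟩⟨b_ζ|`. Hence
`1 + A H_ζ Ā H̄_ζ = (1 + A Ā) + 2ζ A|β̄_ζ⟩⟨b_ζ|`, and the matrix determinant lemma gives the factor
`E_ζζ`.
-/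

open Matrix

noncomputable section

namespace Matrix

section CommRing

variable {n K : Type*} [Fintype n] [DecidableEq n] [CommRing K]

theorem det_add_vecMulVec {S : Matrix n n K} (hS : IsUnit S.det) (u v : n → K) :
    (S + vecMulVec u v).det = S.det * (1 + v ⬝ᵥ S⁻¹ *ᵥ u) := by
  have hfactor : S + vecMulVec u v = S * (1 + vecMulVec (S⁻¹ *ᵥ u) v) := by
    rw [Matrix.mul_add, Matrix.mul_one, mul_vecMulVec, mulVec_mulVec, mul_nonsing_inv _ hS,
      one_mulVec]
  rw [hfactor, det_mul, vecMulVec_eq Unit, det_one_add_replicateCol_mul_replicateRow]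

theorem sub_smul_one_mul_inv_add_smul_one {M : Matrix n n K} {c : K}
    (h : IsUnit (M + c • 1).det) :
    (M - c • 1) * (M + c • 1)⁻¹ = 1 - (2 * c) • (M + c • 1)⁻¹ := by
  have hsplit : M - c • 1 = (M + c • 1) - (2 * c) • 1 := by module
  rw [hsplit, Matrix.sub_mul, mul_nonsing_inv _ h, Matrix.smul_mul, Matrix.one_mul]

theorem add_smul_one_mul_inv_sub_smul_one {M : Matrix n n K} {c : K}
    (h : IsUnit (M - c • 1).det) :
    (M + c • 1) * (M - c • 1)⁻¹ = 1 + (2 * c) • (M - c • 1)⁻¹ := by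
  have hsplit : M + c • 1 = (M - c • 1) + (2 * c) • 1 := by module
  rw [hsplit, Matrix.add_mul, mul_nonsing_inv _ h, Matrix.smul_mul, Matrix.one_mul]

theorem cayley_mul_mul_cayley_of_sylvester {M Mb X : Matrix n n K} {α a : n → K} {c : K}
    (hP : IsUnit (M + c • 1).det) (hQ : IsUnit (Mb - c • 1).det)
    (h : M * X - X * Mb = vecMulVec α a) :
    (M - c • 1) * (M + c • 1)⁻¹ * X * ((Mb + c • 1) * (Mb - c • 1)⁻¹) =
      X + (2 * c) • vecMulVec ((M + c • 1)⁻¹ *ᵥ α) (a ᵥ* (Mb - c • 1)⁻¹) := by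
  set P := M + c • 1
  set Q := Mb - c • 1
  have hM : M = P - c • 1 := by simp [P]
  have hMb : Mb = Q + c • 1 := by simp [Q]
  have hrank : vecMulVec (P⁻¹ *ᵥ α) (a ᵥ* Q⁻¹) =
      X * Q⁻¹ - P⁻¹ * X - (2 * c) • (P⁻¹ * X * Q⁻¹) := by
    rw [← mul_vecMulVec, ← vecMulVec_mul, ← h, hM, hMb]
    simp only [Matrix.mul_sub, Matrix.sub_mul, Matrix.mul_add, Matrix.add_mul, Matrix.smul_mul,
      Matrix.mul_smul, Matrix.mul_one, Matrix.one_mul, ← Matrix.mul_assoc,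
      nonsing_inv_mul _ hP, mul_nonsing_inv_cancel_right _ _ hQ]
    module
  rw [sub_smul_one_mul_inv_add_smul_one hP, add_smul_one_mul_inv_sub_smul_one hQ, hrank]
  simp only [Matrix.mul_add, Matrix.sub_mul, Matrix.smul_mul, Matrix.mul_smul, Matrix.mul_one,
    Matrix.one_mul]
  module

end CommRing

theorem isUnit_det_diagonal_add_smul_one {n K : Type*} [Fintype n] [DecidableEq n] [Field K]
    {d : n → K} {c : K} (h : ∀ i, d i + c ≠ 0) :
    IsUnit (diagonal d + c • (1 : Matrix n n K)).det := by
  rw [smul_one_eq_diagonal, diagonal_add, det_diagonal]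
  exact isUnit_iff_ne_zero.2 (Finset.prod_ne_zero_iff.2 fun i _ => h i)

end Matrix

theorem shifted_tau_det_formula_general
    {N : ℕ} (m mb : Fin N → ℝ)
    (αb ab : Fin N → ℝ)
    (A Ab : Matrix (Fin N) (Fin N) ℝ)
    (hAb : Matrix.diagonal m * Ab - Ab * Matrix.diagonal mb = Matrix.vecMulVec αb ab)
    (ζ : ℝ) (hm : ∀ k, m k ≠ -ζ) (hmb : ∀ k, mb k ≠ ζ)
    (hG : IsUnit ((1 : Matrix (Fin N) (Fin N) ℝ) + A * Ab)) :
    ((1 : Matrix (Fin N) (Fin N) ℝ) + A * Hmat m ζ * Ab * Hbmat mb ζ).det =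
      Efun m mb αb ab A Ab ζ ζ *
        ((1 : Matrix (Fin N) (Fin N) ℝ) + A * Ab).det := by
  have hP : IsUnit (diagonal m + ζ • 1).det :=
    isUnit_det_diagonal_add_smul_one fun k => hm k ∘ eq_neg_of_add_eq_zero_left
  have hQ : IsUnit (diagonal mb - ζ • 1).det := by
    rw [sub_eq_add_neg, ← neg_smul]
    exact isUnit_det_diagonal_add_smul_one fun k => sub_ne_zero.2 (hmb k)
  have hS : IsUnit (1 + A * Ab).det := (isUnit_iff_isUnit_det _).mp hG
  calc ((1 : Matrix (Fin N) (Fin N) ℝ) + A * Hmat m ζ * Ab * Hbmat mb ζ).det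
      = (1 + A * Ab + vecMulVec (A *ᵥ ((2 * ζ) • colBb m αb ζ)) (rowB mb ab ζ)).det := by
        rw [Matrix.mul_assoc A, Matrix.mul_assoc A, Hmat, Hbmat,
          cayley_mul_mul_cayley_of_sylvester hP hQ hAb, Matrix.mul_add, add_assoc,
          Matrix.mul_smul, mul_vecMulVec, mulVec_smul, smul_vecMulVec, colBb, rowB]
    _ = (1 + A * Ab).det *
          (1 + rowB mb ab ζ ⬝ᵥ (1 + A * Ab)⁻¹ *ᵥ A *ᵥ ((2 * ζ) • colBb m αb ζ)) :=
        det_add_vecMulVec hS _ _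
    _ = Efun m mb αb ab A Ab ζ ζ * (1 + A * Ab).det := by
        rw [Efun, mulVec_mulVec, mulVec_smul, dotProduct_smul, smul_eq_mul]
        ring

theorem shifted_tau_det_formula
    {N : ℕ} (hN : 1 ≤ N) (m mb : Fin N → ℝ)
    (αv αb av ab : Fin N → ℝ)
    (A Ab : Matrix (Fin N) (Fin N) ℝ)
    (hA : Matrix.diagonal mb * A - A * Matrix.diagonal m = Matrix.vecMulVec αv av)
    (hAb : Matrix.diagonal m * Ab - Ab * Matrix.diagonal mb = Matrix.vecMulVec αb ab)
    (ζ : ℝ) (hm : ∀ k, m k ≠ -ζ) (hmb : ∀ k, mb k ≠ ζ)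
    (hG : IsUnit ((1 : Matrix (Fin N) (Fin N) ℝ) + A * Ab)) :
    ((1 : Matrix (Fin N) (Fin N) ℝ) + A * Hmat m ζ * Ab * Hbmat mb ζ).det =
      Efun m mb αb ab A Ab ζ ζ *
        ((1 : Matrix (Fin N) (Fin N) ℝ) + A * Ab).det :=
  shifted_tau_det_formula_general m mb αb ab A Ab hAb ζ hm hmb hG

end
end

section
/- Let ξ, η be nonzero reals with ξ ≠ η and ξ + η ≠ 0, with m_k ∉ {−ξ,−η} and m̄_k ∉ {ξ,η} for all k, and assume 1 + A·Ā is invertible. Then the two-shift determinant formula holds: det(1 + A·H_ξ·H_η·Ā·H̄_ξ·H̄_η) = 4ξη·Γ_{ξ,η}²·(D_{ξξ}·D_{ηη} − D_{ξη}·D_{ηξ})·det(1 + A·Ā), where D_{ξη} = E_{ξη}/(ξ+η) and Γ_{ξ,η} = (ξ+η)/(ξ−η). -/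
open Matrix

noncomputable section

namespace TwoShiftAux

lemma diag_add_smul {N : ℕ} (m : Fin N → ℝ) (c : ℝ) :
    Matrix.diagonal m + c • (1 : Matrix (Fin N) (Fin N) ℝ)
      = Matrix.diagonal (fun k => m k + c) := by
  ext i j
  rcases eq_or_ne i j with rfl | h
  · simp
  · simp [Matrix.diagonal_apply_ne _ h, Matrix.one_apply_ne h]

lemma diag_sub_smul {N : ℕ} (m : Fin N → ℝ) (c : ℝ) :
    Matrix.diagonal m - c • (1 : Matrix (Fin N) (Fin N) ℝ)
      = Matrix.diagonal (fun k => m k - c) := by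
  ext i j
  rcases eq_or_ne i j with rfl | h
  · simp
  · simp [Matrix.diagonal_apply_ne _ h, Matrix.one_apply_ne h]

lemma diag_inv {N : ℕ} (f : Fin N → ℝ) (hf : ∀ k, f k ≠ 0) :
    (Matrix.diagonal f)⁻¹ = Matrix.diagonal (fun k => (f k)⁻¹) := by
  apply Matrix.inv_eq_right_inv
  rw [Matrix.diagonal_mul_diagonal]
  ext i j
  rcases eq_or_ne i j with rfl | h
  · simp [mul_inv_cancel₀ (hf i)]
  · simp [Matrix.diagonal_apply_ne _ h, Matrix.one_apply_ne h]

lemma Hmat_diag {N : ℕ} (m : Fin N → ℝ) (ζ : ℝ) (h : ∀ k, m k + ζ ≠ 0) :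
    Hmat m ζ = Matrix.diagonal (fun k => (m k - ζ) * (m k + ζ)⁻¹) := by
  unfold Hmat
  rw [diag_sub_smul, diag_add_smul, diag_inv _ h, Matrix.diagonal_mul_diagonal]

lemma Hbmat_diag {N : ℕ} (mb : Fin N → ℝ) (ζ : ℝ) (h : ∀ k, mb k - ζ ≠ 0) :
    Hbmat mb ζ = Matrix.diagonal (fun k => (mb k + ζ) * (mb k - ζ)⁻¹) := by
  unfold Hbmat
  rw [diag_add_smul, diag_sub_smul, diag_inv _ h, Matrix.diagonal_mul_diagonal]

lemma rowB_eq {N : ℕ} (mb ab : Fin N → ℝ) (ξ : ℝ) (h : ∀ k, mb k - ξ ≠ 0) :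
    rowB mb ab ξ = fun k => ab k * (mb k - ξ)⁻¹ := by
  funext k
  unfold rowB
  rw [diag_sub_smul, diag_inv _ h, Matrix.vecMul_diagonal]

lemma colBb_eq {N : ℕ} (m αb : Fin N → ℝ) (η : ℝ) (h : ∀ k, m k + η ≠ 0) :
    colBb m αb η = fun j => (m j + η)⁻¹ * αb j := by
  funext j
  unfold colBb
  rw [diag_add_smul, diag_inv _ h, Matrix.mulVec_diagonal]

lemma sum_helper {N : ℕ} (c1 c2 : ℝ) (b1 b2 S : Fin N → ℝ) :
    ∑ k, (c1 * b1 k + c2 * b2 k) * S k = c1 * (b1 ⬝ᵥ S) + c2 * (b2 ⬝ᵥ S) := by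
  rw [dotProduct, dotProduct, Finset.mul_sum, Finset.mul_sum, ← Finset.sum_add_distrib]
  exact Finset.sum_congr rfl fun k _ => by ring

lemma mul2_apply {N : ℕ} (U : Matrix (Fin N) (Fin 2) ℝ) (V : Matrix (Fin 2) (Fin N) ℝ)
    (j : Fin N) (k : Fin N) : (U * V) j k = U j 0 * V 0 k + U j 1 * V 1 k := by
  rw [Matrix.mul_apply, Fin.sum_univ_two]

lemma cancel_diag {N : ℕ} {d1 d2 : Fin N → ℝ} (h1 : ∀ j, d1 j ≠ 0) (h2 : ∀ k, d2 k ≠ 0)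
    {X Y : Matrix (Fin N) (Fin N) ℝ}
    (h : Matrix.diagonal d1 * X * Matrix.diagonal d2
        = Matrix.diagonal d1 * Y * Matrix.diagonal d2) : X = Y := by
  ext j k
  have h' := congrFun (congrFun h j) k
  rw [Matrix.mul_diagonal, Matrix.mul_diagonal, Matrix.diagonal_mul, Matrix.diagonal_mul] at h'
  exact mul_left_cancel₀ (h1 j) (mul_right_cancel₀ (h2 k) h')

lemma mul_entry_col {N : ℕ} (X : Matrix (Fin N) (Fin N) ℝ) (U : Matrix (Fin N) (Fin 2) ℝ)
    (c : Fin 2) (k : Fin N) : (X * U) k c = (X *ᵥ fun l => U l c) k := by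
  simp [Matrix.mul_apply, Matrix.mulVec, dotProduct]

end TwoShiftAux

set_option maxHeartbeats 2000000 in
open TwoShiftAux in
theorem two_shift_determinant_formula
    {N : ℕ} (hN : 1 ≤ N) (m mb : Fin N → ℝ)
    (αv αb av ab : Fin N → ℝ)
    (A Ab : Matrix (Fin N) (Fin N) ℝ)
    (hA : Matrix.diagonal mb * A - A * Matrix.diagonal m = Matrix.vecMulVec αv av)
    (hAb : Matrix.diagonal m * Ab - Ab * Matrix.diagonal mb = Matrix.vecMulVec αb ab)
    (ξ η : ℝ) (hξ : ξ ≠ 0) (hη : η ≠ 0) (hξη : ξ ≠ η) (hξη' : ξ + η ≠ 0)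
    (hm : ∀ k, m k ≠ -ξ ∧ m k ≠ -η) (hmb : ∀ k, mb k ≠ ξ ∧ mb k ≠ η)
    (hG : IsUnit ((1 : Matrix (Fin N) (Fin N) ℝ) + A * Ab)) :
    ((1 : Matrix (Fin N) (Fin N) ℝ) +
        A * Hmat m ξ * Hmat m η * Ab * Hbmat mb ξ * Hbmat mb η).det =
      4 * ξ * η * ((ξ + η) / (ξ - η)) ^ 2 *
        (Efun m mb αb ab A Ab ξ ξ / (ξ + ξ) * (Efun m mb αb ab A Ab η η / (η + η)) -
          Efun m mb αb ab A Ab ξ η / (ξ + η) * (Efun m mb αb ab A Ab η ξ / (η + ξ))) *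
        ((1 : Matrix (Fin N) (Fin N) ℝ) + A * Ab).det := by
  classical
  have hsne : ξ - η ≠ 0 := sub_ne_zero.mpr hξη
  have hmξ : ∀ j, m j + ξ ≠ 0 := fun j h => (hm j).1 (by linarith)
  have hmη : ∀ j, m j + η ≠ 0 := fun j h => (hm j).2 (by linarith)
  have hmbξ : ∀ k, mb k - ξ ≠ 0 := fun k h => (hmb k).1 (by linarith)
  have hmbη : ∀ k, mb k - η ≠ 0 := fun k h => (hmb k).2 (by linarith)
  set lxx : ℝ := 2*ξ*(ξ+η)^2/(ξ-η)^2 with hlxx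
  set lyy : ℝ := 2*η*(ξ+η)^2/(ξ-η)^2 with hlyy
  set lxy : ℝ := -(4*ξ*η*(ξ+η))/(ξ-η)^2 with hlxy
  set U : Matrix (Fin N) (Fin 2) ℝ :=
    Matrix.of (fun j (c : Fin 2) => ![colBb m αb ξ j, colBb m αb η j] c) with hU
  set V : Matrix (Fin 2) (Fin N) ℝ :=
    Matrix.of (fun (c : Fin 2) k =>
      ![lxx * rowB mb ab ξ k + lxy * rowB mb ab η k,
        lxy * rowB mb ab ξ k + lyy * rowB mb ab η k] c) with hV
  -- Step A: the key rank-two update identity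
  set U' : Matrix (Fin N) (Fin 2) ℝ :=
    Matrix.of (fun j (c : Fin 2) => ![(m j + η) * αb j, (m j + ξ) * αb j] c) with hU'
  set V' : Matrix (Fin 2) (Fin N) ℝ :=
    Matrix.of (fun (c : Fin 2) k =>
      ![2*ξ*(ξ+η)^2 * (ab k * (mb k - η)) + (-(4*ξ*η*(ξ+η))) * (ab k * (mb k - ξ)),
        (-(4*ξ*η*(ξ+η))) * (ab k * (mb k - η)) + 2*η*(ξ+η)^2 * (ab k * (mb k - ξ))] c) with hV'
  set d1 : Fin N → ℝ := fun j => (m j + ξ) * (m j + η) with hd1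
  set d2 : Fin N → ℝ := fun k => (ξ - η)^2 * ((mb k - ξ) * (mb k - η)) with hd2
  have hd1ne : ∀ j, d1 j ≠ 0 := fun j => mul_ne_zero (hmξ j) (hmη j)
  have hd2ne : ∀ k, d2 k ≠ 0 :=
    fun k => mul_ne_zero (pow_ne_zero 2 hsne) (mul_ne_zero (hmbξ k) (hmbη k))
  have hD1U : Matrix.diagonal d1 * U = U' := by
    ext j c
    rw [Matrix.diagonal_mul]
    fin_cases c <;>
      simp only [hU, hU', Matrix.of_apply, Matrix.cons_val_zero, Matrix.cons_val_one,
        Matrix.head_cons, colBb_eq m αb ξ hmξ, colBb_eq m αb η hmη, hd1, Fin.zero_eta,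
        Fin.mk_one] <;>
      field_simp [hmξ j, hmη j] <;> ring
  have hVD2 : V * Matrix.diagonal d2 = V' := by
    ext c k
    rw [Matrix.mul_diagonal]
    fin_cases c <;>
      simp only [hV, hV', Matrix.of_apply, Matrix.cons_val_zero, Matrix.cons_val_one,
        Matrix.head_cons, rowB_eq mb ab ξ hmbξ, rowB_eq mb ab η hmbη, hd2, hlxx, hlyy, hlxy,
        Fin.zero_eta, Fin.mk_one] <;>
      field_simp [hmbξ k, hmbη k, hsne] <;> ring
  have hkey : Hmat m ξ * Hmat m η * Ab * Hbmat mb ξ * Hbmat mb η = Ab + U * V := by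
    rw [Hmat_diag m ξ hmξ, Hmat_diag m η hmη, Hbmat_diag mb ξ hmbξ, Hbmat_diag mb η hmbη,
      Matrix.diagonal_mul_diagonal, Matrix.mul_assoc, Matrix.diagonal_mul_diagonal]
    apply cancel_diag hd1ne hd2ne
    trans (Matrix.diagonal (fun j => (m j - ξ) * (m j - η)) * Ab *
      Matrix.diagonal (fun k => (ξ - η)^2 * ((mb k + ξ) * (mb k + η))))
    · ext j k
      simp only [Matrix.mul_diagonal, Matrix.diagonal_mul, Pi.mul_apply, hd1, hd2]
      field_simp [hmξ j, hmη j, hmbξ k, hmbη k]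
    · rw [Matrix.mul_add, Matrix.add_mul]
      have hUV : Matrix.diagonal d1 * (U * V) * Matrix.diagonal d2 = U' * V' := by
        rw [← hD1U, ← hVD2]
        simp only [Matrix.mul_assoc]
      rw [hUV]
      ext j k
      have hrel : m j * Ab j k - Ab j k * mb k = αb j * ab k := by
        have h := congrFun (congrFun hAb j) k
        simpa [Matrix.sub_apply, Matrix.diagonal_mul, Matrix.mul_diagonal,
          Matrix.vecMulVec_apply] using h
      simp only [Matrix.mul_diagonal, Matrix.diagonal_mul, Matrix.add_apply, mul2_apply,
        hU', hV', Matrix.of_apply, Matrix.cons_val_zero, Matrix.cons_val_one,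
        Matrix.head_cons, hd1, hd2]
      linear_combination ((m j + η) * (2*ξ*(ξ+η)^2*(mb k - η) + (-(4*ξ*η*(ξ+η)))*(mb k - ξ)) +
        (m j + ξ) * ((-(4*ξ*η*(ξ+η)))*(mb k - η) + 2*η*(ξ+η)^2*(mb k - ξ))) * hrel
  -- determinant factorization
  have hdet0 : IsUnit ((1 : Matrix (Fin N) (Fin N) ℝ) + A * Ab).det :=
    (Matrix.isUnit_iff_isUnit_det _).mp hG
  have hGinv : ((1 : Matrix (Fin N) (Fin N) ℝ) + A * Ab) *
      ((1 : Matrix (Fin N) (Fin N) ℝ) + A * Ab)⁻¹ = 1 := Matrix.mul_nonsing_inv _ hdet0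
  have hstep : A * Hmat m ξ * Hmat m η * Ab * Hbmat mb ξ * Hbmat mb η
      = A * Ab + A * (U * V) := by
    calc A * Hmat m ξ * Hmat m η * Ab * Hbmat mb ξ * Hbmat mb η
        = A * (Hmat m ξ * Hmat m η * Ab * Hbmat mb ξ * Hbmat mb η) := by
          simp only [Matrix.mul_assoc]
      _ = A * (Ab + U * V) := by rw [hkey]
      _ = A * Ab + A * (U * V) := by rw [Matrix.mul_add]
  have hfact : (1 : Matrix (Fin N) (Fin N) ℝ) +
      A * Hmat m ξ * Hmat m η * Ab * Hbmat mb ξ * Hbmat mb η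
      = ((1 : Matrix (Fin N) (Fin N) ℝ) + A * Ab) *
        (1 + (((1 : Matrix (Fin N) (Fin N) ℝ) + A * Ab)⁻¹ * A * U) * V) := by
    rw [hstep, Matrix.mul_add, Matrix.mul_one]
    have h2 : ((1 : Matrix (Fin N) (Fin N) ℝ) + A * Ab) *
        ((((1 : Matrix (Fin N) (Fin N) ℝ) + A * Ab)⁻¹ * A * U) * V) = A * (U * V) := by
      rw [← Matrix.mul_assoc, ← Matrix.mul_assoc, ← Matrix.mul_assoc, hGinv, Matrix.one_mul,
        Matrix.mul_assoc]
    rw [h2, add_assoc]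
  rw [hfact, Matrix.det_mul,
    Matrix.det_one_add_mul_comm (((1 : Matrix (Fin N) (Fin N) ℝ) + A * Ab)⁻¹ * A * U) V]
  -- the 2×2 determinant
  set GA : Matrix (Fin N) (Fin N) ℝ := ((1 : Matrix (Fin N) (Fin N) ℝ) + A * Ab)⁻¹ * A with hGAdef
  set w11 : ℝ := rowB mb ab ξ ⬝ᵥ GA *ᵥ colBb m αb ξ with hw11
  set w12 : ℝ := rowB mb ab ξ ⬝ᵥ GA *ᵥ colBb m αb η with hw12
  set w21 : ℝ := rowB mb ab η ⬝ᵥ GA *ᵥ colBb m αb ξ with hw21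
  set w22 : ℝ := rowB mb ab η ⬝ᵥ GA *ᵥ colBb m αb η with hw22
  have hcol0 : (fun l => U l 0) = colBb m αb ξ := by
    funext l; simp [hU]
  have hcol1 : (fun l => U l 1) = colBb m αb η := by
    funext l; simp [hU]
  have hVY : ∀ c c' : ℝ → ℝ, True := fun _ _ => trivial
  have e00 : (V * (GA * U)) 0 0 = lxx * w11 + lxy * w21 := by
    rw [hw11, hw21, Matrix.mul_apply]
    simp only [mul_entry_col, hcol0, hV, Matrix.of_apply, Matrix.cons_val_zero]
    exact sum_helper _ _ _ _ _
  have e01 : (V * (GA * U)) 0 1 = lxx * w12 + lxy * w22 := by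
    rw [hw12, hw22, Matrix.mul_apply]
    simp only [mul_entry_col, hcol1, hV, Matrix.of_apply, Matrix.cons_val_zero]
    exact sum_helper _ _ _ _ _
  have e10 : (V * (GA * U)) 1 0 = lxy * w11 + lyy * w21 := by
    rw [hw11, hw21, Matrix.mul_apply]
    simp only [mul_entry_col, hcol0, hV, Matrix.of_apply, Matrix.cons_val_one, Matrix.head_cons]
    exact sum_helper _ _ _ _ _
  have e11 : (V * (GA * U)) 1 1 = lxy * w12 + lyy * w22 := by
    rw [hw12, hw22, Matrix.mul_apply]
    simp only [mul_entry_col, hcol1, hV, Matrix.of_apply, Matrix.cons_val_one, Matrix.head_cons]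
    exact sum_helper _ _ _ _ _
  rw [Matrix.det_fin_two]
  simp only [Matrix.add_apply, Matrix.one_apply_eq, Matrix.one_apply_ne (by decide : (0:Fin 2) ≠ 1),
    Matrix.one_apply_ne (by decide : (1:Fin 2) ≠ 0), e00, e01, e10, e11]
  -- E-function values
  have hE11 : Efun m mb αb ab A Ab ξ ξ = 1 + (ξ + ξ) * w11 := rfl
  have hE22 : Efun m mb αb ab A Ab η η = 1 + (η + η) * w22 := rfl
  have hE12 : Efun m mb αb ab A Ab ξ η = 1 + (ξ + η) * w12 := rfl
  have hE21 : Efun m mb αb ab A Ab η ξ = 1 + (η + ξ) * w21 := rfl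
  rw [hE11, hE22, hE12, hE21, hlxx, hlyy, hlxy]
  have hη2 : η + ξ ≠ 0 := by rw [add_comm]; exact hξη'
  have h2ξ : ξ + ξ ≠ 0 := by intro h; exact hξ (by linarith)
  have h2η : η + η ≠ 0 := by intro h; exact hη (by linarith)
  field_simp [hξ, hη, hξη', hη2, hsne, h2ξ, h2η]
  ring

end
end

section
/- Let ξ_1,…,ξ_n (n ≥ 1) be pairwise distinct nonzero reals with ξ_i + ξ_j ≠ 0 for all i,j, such that m_k ≠ −ξ_i and m̄_k ≠ ξ_i for all i,k, and assume 1 + A·Ā is invertible. Then det(1 + A·(∏_{i=1}^n H_{ξ_i})·Ā·(∏_{i=1}^n H̄_{ξ_i}))·det[(1/(ξ_i+ξ_j))_{i,j=1..n}] = det(1 + A·Ā)·det[(E_{ξ_iξ_j}/(ξ_i+ξ_j))_{i,j=1..n}]. -/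
open Matrix

noncomputable section

/-!
Every shift matrix is diagonal, so `∏ H_{ξ_i} = diag (f (m_k))` and `∏ H̄_{ξ_i} = diag (f (m̄_l)⁻¹)`
for the Blaschke-type product `f x = ∏ (x - ξ_i) / (x + ξ_i)`. Lagrange interpolation of
`∏ (x + ξ_j) - ∏ (x - ξ_j)` at the nodes `ξ_i` gives the kernel expansion
`f x / f y = 1 + (x - y) ∑ t_i(x) / (y - ξ_i)`, and at `y = -ξ_j`, where `1 / f` vanishes, it says that
`t(x)` solves `t(x) C = ((x + ξ_j)⁻¹)_j` for the Cauchy matrix `C = (1 / (ξ_i + ξ_j))`.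
With the Sylvester equation for `Ā` this turns `(∏ H) Ā (∏ H̄)` into the rank-`n` update `Ā + T B`, where
`T = (ᾱ_k t_i(m_k))` satisfies `T C = (|β̄_{ξ_j}⟩)_j` and `B` has rows `⟨b_{ξ_i}|`. Factoring out
`1 + A Ā`, the formula becomes the Weinstein–Aronszajn identity `det (1 + X Y) = det (1 + Y X)`.
-/

open Finset Polynomial

section CauchyKernel

variable {K ι : Type*} [Field K] [Fintype ι] [DecidableEq ι] {ξ : ι → K}

theorem eval_eq_sum_lagrange (hξ : Function.Injective ξ) {p : K[X]}
    (hp : p.degree < Fintype.card ι) (x : K) :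
    p.eval x = ∑ i, p.eval (ξ i) / (∏ j ∈ univ.erase i, (ξ i - ξ j)) *
      ∏ j ∈ univ.erase i, (x - ξ j) := by
  conv_lhs => rw [Lagrange.eq_interpolate (s := univ) hξ.injOn hp, Lagrange.interpolate_eq_sum]
  simp [eval_finsetSum, eval_prod]

variable (ξ) in
def cauchyWeight (i : ι) : K :=
  (∏ j, (ξ i + ξ j)) / ∏ j ∈ univ.erase i, (ξ i - ξ j)

theorem sum_cauchyWeight_mul_prod_erase (hξ : Function.Injective ξ) (x : K) :
    ∑ i, cauchyWeight ξ i * ∏ j ∈ univ.erase i, (x - ξ j) =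
      ∏ j, (x + ξ j) - ∏ j, (x - ξ j) := by
  set p : K[X] := ∏ j, (X + C (ξ j)) - ∏ j, (X - C (ξ j))
  have hplus : (∏ j, (X + C (ξ j))).Monic := monic_prod_of_monic _ _ fun j _ => monic_X_add_C _
  have hminus : (∏ j, (X - C (ξ j))).Monic := monic_prod_of_monic _ _ fun j _ => monic_X_sub_C _
  have hdplus : (∏ j, (X + C (ξ j))).degree = (Fintype.card ι : WithBot ℕ) := by
    simp [degree_prod]
  have hdminus : (∏ j, (X - C (ξ j))).degree = (Fintype.card ι : WithBot ℕ) := by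
    simp [degree_prod]
  have hdeg : p.degree < Fintype.card ι := hdplus ▸ degree_sub_lt_left (hdplus.trans hdminus.symm)
    hplus.ne_zero (hplus.leadingCoeff.trans hminus.leadingCoeff.symm)
  have hnode (i : ι) : p.eval (ξ i) = ∏ j, (ξ i + ξ j) := by
    simp only [p, eval_sub, eval_prod, eval_add, eval_X, eval_C,
      prod_eq_zero (f := fun j => ξ i - ξ j) (mem_univ i) (sub_self _), sub_zero]
  calc ∑ i, cauchyWeight ξ i * ∏ j ∈ univ.erase i, (x - ξ j) = p.eval x := by
        rw [eval_eq_sum_lagrange hξ hdeg x]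
        simp only [hnode, cauchyWeight]
    _ = ∏ j, (x + ξ j) - ∏ j, (x - ξ j) := by simp [p, eval_prod]

theorem sub_mul_sum_cauchyWeight (hξ : Function.Injective ξ) (x y : K) :
    (x - y) * ∑ i, cauchyWeight ξ i * (∏ j ∈ univ.erase i, (x - ξ j)) *
        ∏ j ∈ univ.erase i, (y - ξ j) =
      (∏ j, (x - ξ j)) * ∏ j, (y + ξ j) - (∏ j, (x + ξ j)) * ∏ j, (y - ξ j) := by
  have hsplit (i : ι) : (x - y) * (cauchyWeight ξ i * (∏ j ∈ univ.erase i, (x - ξ j)) *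
        ∏ j ∈ univ.erase i, (y - ξ j)) =
      (∏ j, (x - ξ j)) * (cauchyWeight ξ i * ∏ j ∈ univ.erase i, (y - ξ j)) -
        (∏ j, (y - ξ j)) * (cauchyWeight ξ i * ∏ j ∈ univ.erase i, (x - ξ j)) := by
    rw [← mul_prod_erase univ (fun j => x - ξ j) (mem_univ i),
      ← mul_prod_erase univ (fun j => y - ξ j) (mem_univ i)]
    ring
  rw [mul_sum, sum_congr rfl fun i _ => hsplit i, sum_sub_distrib, ← mul_sum, ← mul_sum,
    sum_cauchyWeight_mul_prod_erase hξ, sum_cauchyWeight_mul_prod_erase hξ]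
  ring

def cauchyCoeff (ξ : ι → K) (i : ι) (x : K) : K :=
  cauchyWeight ξ i * (∏ j ∈ univ.erase i, (x - ξ j)) / ∏ j, (x + ξ j)

def blaschke (ξ : ι → K) (x : K) : K :=
  ∏ j, (x - ξ j) / (x + ξ j)

theorem blaschke_mul_inv_blaschke (hξ : Function.Injective ξ) {x y : K}
    (hx : ∀ i, x ≠ -ξ i) (hy : ∀ i, y ≠ ξ i) :
    blaschke ξ x * (blaschke ξ y)⁻¹ = 1 + (x - y) * ∑ i, cauchyCoeff ξ i x / (y - ξ i) := by
  have hx' : ∏ j, (x + ξ j) ≠ 0 :=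
    prod_ne_zero_iff.2 fun j _ h => hx j (eq_neg_of_add_eq_zero_left h)
  have hy' : ∏ j, (y - ξ j) ≠ 0 := prod_ne_zero_iff.2 fun j _ => sub_ne_zero.2 (hy j)
  have hterm (i : ι) : cauchyCoeff ξ i x / (y - ξ i) =
      cauchyWeight ξ i * (∏ j ∈ univ.erase i, (x - ξ j)) * (∏ j ∈ univ.erase i, (y - ξ j)) /
        ((∏ j, (x + ξ j)) * ∏ j, (y - ξ j)) := by
    have hyi : ∏ j ∈ univ.erase i, (y - ξ j) ≠ 0 :=
      prod_ne_zero_iff.2 fun j _ => sub_ne_zero.2 (hy j)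
    rw [cauchyCoeff, ← mul_prod_erase univ (fun j => y - ξ j) (mem_univ i)]
    field_simp [sub_ne_zero.2 (hy i)]
  rw [sum_congr rfl fun i _ => hterm i, ← sum_div, mul_div_assoc', sub_mul_sum_cauchyWeight hξ,
    blaschke, blaschke, prod_div_distrib, prod_div_distrib, inv_div]
  field_simp
  ring

theorem sum_cauchyCoeff_div_add (hξ : Function.Injective ξ) (hsum : ∀ i j, ξ i + ξ j ≠ 0)
    {x : K} (hx : ∀ i, x ≠ -ξ i) (j : ι) :
    ∑ i, cauchyCoeff ξ i x / (ξ i + ξ j) = (x + ξ j)⁻¹ := by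
  have hxj : x + ξ j ≠ 0 := fun h => hx j (eq_neg_of_add_eq_zero_left h)
  have hpole : (blaschke ξ (-ξ j))⁻¹ = 0 := by
    rw [blaschke, inv_eq_zero]
    exact prod_eq_zero (mem_univ j) (by simp)
  have hneg : ∑ i, cauchyCoeff ξ i x / (-ξ j - ξ i) = -∑ i, cauchyCoeff ξ i x / (ξ i + ξ j) := by
    rw [← sum_neg_distrib]
    refine sum_congr rfl fun i _ => ?_
    rw [show -ξ j - ξ i = -(ξ i + ξ j) by ring, div_neg]
  have key := blaschke_mul_inv_blaschke hξ hx (y := -ξ j) fun i h => hsum i j (by rw [← h]; ring)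
  rw [hpole, mul_zero, hneg] at key
  field_simp
  linear_combination key

end CauchyKernel

section Matrices

variable {R ι κ : Type*} [Fintype ι] [DecidableEq ι]

theorem Matrix.inv_diagonal_of_ne_zero [Field R] {d : ι → R} (h : ∀ k, d k ≠ 0) :
    (diagonal d)⁻¹ = diagonal fun k => (d k)⁻¹ :=
  inv_eq_right_inv <| by
    rw [diagonal_mul_diagonal, ← diagonal_one]
    exact congrArg diagonal (funext fun k => mul_inv_cancel₀ (h k))

theorem Matrix.inv_diagonal_add_smul_one [Field R] {d : ι → R} {ζ : R} (h : ∀ k, d k ≠ -ζ) :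
    (diagonal d + ζ • (1 : Matrix ι ι R))⁻¹ = diagonal fun k => (d k + ζ)⁻¹ := by
  rw [smul_one_eq_diagonal, diagonal_add,
    inv_diagonal_of_ne_zero fun k hk => h k (eq_neg_of_add_eq_zero_left hk)]

theorem Matrix.inv_diagonal_sub_smul_one [Field R] {d : ι → R} {ζ : R} (h : ∀ k, d k ≠ ζ) :
    (diagonal d - ζ • (1 : Matrix ι ι R))⁻¹ = diagonal fun k => (d k - ζ)⁻¹ := by
  rw [smul_one_eq_diagonal, diagonal_sub, inv_diagonal_of_ne_zero fun k => sub_ne_zero.2 (h k)]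

theorem Matrix.list_prod_ofFn_diagonal [CommSemiring R] {n : ℕ} (d : Fin n → ι → R) :
    (List.ofFn fun i => diagonal (d i)).prod = diagonal fun k => ∏ i, d i k := by
  have : (List.ofFn fun i => diagonal (d i)) = (List.ofFn d).map (diagonalRingHom ι R) := by
    rw [List.map_ofFn]
    rfl
  rw [this, ← map_list_prod, List.prod_ofFn]
  exact congrArg diagonal (funext fun k => prod_apply k _ _)

theorem Matrix.diagonal_mul_mul_diagonal_of_sylvester [CommRing R] {m mb αb ab : ι → R}
    {Ab : Matrix ι ι R} (hAb : diagonal m * Ab - Ab * diagonal mb = vecMulVec αb ab)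
    {d db : ι → R} {S : Matrix ι ι R} (h : ∀ k l, d k * db l = 1 + (m k - mb l) * S k l) :
    diagonal d * Ab * diagonal db = Ab + of fun k l => αb k * ab l * S k l := by
  ext k l
  have hkl := congrFun₂ hAb k l
  simp only [sub_apply, diagonal_mul, mul_diagonal, vecMulVec_apply] at hkl
  simp only [diagonal_mul, mul_diagonal, add_apply, of_apply]
  linear_combination Ab k l * h k l + S k l * hkl

theorem Matrix.det_one_add_mul_add_mul_mul_det [CommRing R] [Fintype κ] [DecidableEq κ]
    {A Ab : Matrix ι ι R} (hG : IsUnit (1 + A * Ab)) (T : Matrix ι κ R) (B : Matrix κ ι R)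
    (C : Matrix κ κ R) :
    (1 + A * (Ab + T * B)).det * C.det =
      (1 + A * Ab).det * (C + B * ((1 + A * Ab)⁻¹ * A) * (T * C)).det := by
  set G := (1 + A * Ab)⁻¹
  have hGinv : (1 + A * Ab) * G = 1 := mul_nonsing_inv _ ((isUnit_iff_isUnit_det _).1 hG)
  have hleft : (1 + A * Ab) * (1 + G * A * T * B) = 1 + A * (Ab + T * B) := by
    rw [mul_add, mul_one, ← Matrix.mul_assoc, ← Matrix.mul_assoc, ← Matrix.mul_assoc, hGinv,
      one_mul, Matrix.mul_add, add_assoc, Matrix.mul_assoc A]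
  have hright : C + B * (G * A) * (T * C) = (1 + B * (G * A * T)) * C := by
    simp only [add_mul, one_mul, Matrix.mul_assoc]
  rw [← hleft, hright, det_mul, det_mul, det_one_add_mul_comm (G * A * T) B, mul_assoc]

end Matrices

section Shifts

variable {N : ℕ}

theorem Hmat_eq_diagonal {m : Fin N → ℝ} {ζ : ℝ} (h : ∀ k, m k ≠ -ζ) :
    Hmat m ζ = diagonal fun k => (m k - ζ) / (m k + ζ) := by
  rw [Hmat, inv_diagonal_add_smul_one h, smul_one_eq_diagonal, diagonal_sub,
    diagonal_mul_diagonal]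
  simp only [div_eq_mul_inv]

theorem Hbmat_eq_diagonal {mb : Fin N → ℝ} {ζ : ℝ} (h : ∀ k, mb k ≠ ζ) :
    Hbmat mb ζ = diagonal fun k => (mb k + ζ) / (mb k - ζ) := by
  rw [Hbmat, inv_diagonal_sub_smul_one h, smul_one_eq_diagonal, diagonal_add,
    diagonal_mul_diagonal]
  simp only [div_eq_mul_inv]

theorem list_prod_Hmat {n : ℕ} {ξ : Fin n → ℝ} {m : Fin N → ℝ} (hm : ∀ i k, m k ≠ -ξ i) :
    (List.ofFn fun i => Hmat m (ξ i)).prod = diagonal fun k => blaschke ξ (m k) := by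
  simp only [Hmat_eq_diagonal (hm _), list_prod_ofFn_diagonal, blaschke]

theorem list_prod_Hbmat {n : ℕ} {ξ : Fin n → ℝ} {mb : Fin N → ℝ} (hmb : ∀ i k, mb k ≠ ξ i) :
    (List.ofFn fun i => Hbmat mb (ξ i)).prod = diagonal fun k => (blaschke ξ (mb k))⁻¹ := by
  simp only [Hbmat_eq_diagonal (hmb _), list_prod_ofFn_diagonal, blaschke, ← prod_inv_distrib,
    inv_div]

theorem rowB_apply {mb : Fin N → ℝ} (ab : Fin N → ℝ) {ζ : ℝ} (h : ∀ k, mb k ≠ ζ) (l : Fin N) :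
    rowB mb ab ζ l = ab l * (mb l - ζ)⁻¹ := by
  rw [rowB, inv_diagonal_sub_smul_one h, vecMul_diagonal]

theorem colBb_apply {m : Fin N → ℝ} (αb : Fin N → ℝ) {ζ : ℝ} (h : ∀ k, m k ≠ -ζ) (k : Fin N) :
    colBb m αb ζ k = (m k + ζ)⁻¹ * αb k := by
  rw [colBb, inv_diagonal_add_smul_one h, mulVec_diagonal]

variable {κ : Type*} {ξ : κ → ℝ}

theorem of_Efun_div {m mb αb ab : Fin N → ℝ} (A Ab : Matrix (Fin N) (Fin N) ℝ)
    (hsum : ∀ i j, ξ i + ξ j ≠ 0) :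
    (of fun i j => Efun m mb αb ab A Ab (ξ i) (ξ j) / (ξ i + ξ j)) =
      (of fun i j => 1 / (ξ i + ξ j)) +
        (of fun i => rowB mb ab (ξ i)) * ((1 + A * Ab)⁻¹ * A) * (of fun j => colBb m αb (ξ j))ᵀ := by
  ext i j
  have hdot : ((of fun i => rowB mb ab (ξ i)) * ((1 + A * Ab)⁻¹ * A) *
      (of fun j => colBb m αb (ξ j))ᵀ) i j =
      rowB mb ab (ξ i) ⬝ᵥ ((1 + A * Ab)⁻¹ * A) *ᵥ colBb m αb (ξ j) := by
    rw [Matrix.mul_assoc]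
    simp [mul_apply, dotProduct, mulVec]
  rw [Matrix.add_apply, hdot, of_apply, of_apply, Efun]
  field_simp [hsum i j]

variable [Fintype κ] [DecidableEq κ]

theorem diagonal_blaschke_mul_mul_diagonal {m mb αb ab : Fin N → ℝ}
    {Ab : Matrix (Fin N) (Fin N) ℝ} (hAb : diagonal m * Ab - Ab * diagonal mb = vecMulVec αb ab)
    (hξ : Function.Injective ξ) (hm : ∀ i k, m k ≠ -ξ i) (hmb : ∀ i k, mb k ≠ ξ i) :
    diagonal (fun k => blaschke ξ (m k)) * Ab * diagonal (fun l => (blaschke ξ (mb l))⁻¹) =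
      Ab + (of fun k i => αb k * cauchyCoeff ξ i (m k)) * of fun i => rowB mb ab (ξ i) := by
  rw [diagonal_mul_mul_diagonal_of_sylvester hAb
    (S := of fun k l => ∑ i, cauchyCoeff ξ i (m k) / (mb l - ξ i))
    fun k l => blaschke_mul_inv_blaschke hξ (hm · k) (hmb · l)]
  congr 1
  ext k l
  simp only [of_apply, mul_apply, rowB_apply ab (hmb _), mul_sum]
  exact sum_congr rfl fun i _ => by ring

theorem cauchyCoeff_mul_cauchy {m αb : Fin N → ℝ} (hξ : Function.Injective ξ)
    (hsum : ∀ i j, ξ i + ξ j ≠ 0) (hm : ∀ i k, m k ≠ -ξ i) :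
    (of fun k i => αb k * cauchyCoeff ξ i (m k)) * (of fun i j => 1 / (ξ i + ξ j)) =
      (of fun j => colBb m αb (ξ j))ᵀ := by
  ext k j
  simp only [mul_apply, of_apply, transpose_apply, mul_one_div, mul_div_assoc]
  rw [← mul_sum, sum_cauchyCoeff_div_add hξ hsum (hm · k), colBb_apply αb (hm j), mul_comm]

end Shifts

theorem n_shift_determinant_formula_general
    {N : ℕ} (m mb : Fin N → ℝ)
    (αb ab : Fin N → ℝ)
    (A Ab : Matrix (Fin N) (Fin N) ℝ)
    (hAb : Matrix.diagonal m * Ab - Ab * Matrix.diagonal mb = Matrix.vecMulVec αb ab)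
    (n : ℕ) (ξ : Fin n → ℝ)
    (hdist : ∀ i j, i ≠ j → ξ i ≠ ξ j)
    (hsum : ∀ i j, ξ i + ξ j ≠ 0)
    (hm : ∀ i k, m k ≠ -ξ i) (hmb : ∀ i k, mb k ≠ ξ i)
    (hG : IsUnit ((1 : Matrix (Fin N) (Fin N) ℝ) + A * Ab)) :
    ((1 : Matrix (Fin N) (Fin N) ℝ) +
          A * (List.ofFn fun i => Hmat m (ξ i)).prod *
            Ab * (List.ofFn fun i => Hbmat mb (ξ i)).prod).det *
        (Matrix.of fun i j : Fin n => 1 / (ξ i + ξ j)).det =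
      ((1 : Matrix (Fin N) (Fin N) ℝ) + A * Ab).det *
        (Matrix.of fun i j : Fin n =>
          Efun m mb αb ab A Ab (ξ i) (ξ j) / (ξ i + ξ j)).det := by
  have hξ : Function.Injective ξ := fun i j h => by_contra fun hij => hdist i j hij h
  rw [list_prod_Hmat hm, list_prod_Hbmat hmb, Matrix.mul_assoc A, Matrix.mul_assoc A,
    diagonal_blaschke_mul_mul_diagonal hAb hξ hm hmb, of_Efun_div A Ab hsum,
    ← cauchyCoeff_mul_cauchy hξ hsum hm]
  exact det_one_add_mul_add_mul_mul_det hG _ _ _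

theorem n_shift_determinant_formula
    {N : ℕ} (hN : 1 ≤ N) (m mb : Fin N → ℝ)
    (αv αb av ab : Fin N → ℝ)
    (A Ab : Matrix (Fin N) (Fin N) ℝ)
    (hA : Matrix.diagonal mb * A - A * Matrix.diagonal m = Matrix.vecMulVec αv av)
    (hAb : Matrix.diagonal m * Ab - Ab * Matrix.diagonal mb = Matrix.vecMulVec αb ab)
    (n : ℕ) (hn : 1 ≤ n) (ξ : Fin n → ℝ)
    (hdist : ∀ i j, i ≠ j → ξ i ≠ ξ j)
    (hnz : ∀ i, ξ i ≠ 0)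
    (hsum : ∀ i j, ξ i + ξ j ≠ 0)
    (hm : ∀ i k, m k ≠ -ξ i) (hmb : ∀ i k, mb k ≠ ξ i)
    (hG : IsUnit ((1 : Matrix (Fin N) (Fin N) ℝ) + A * Ab)) :
    ((1 : Matrix (Fin N) (Fin N) ℝ) +
          A * (List.ofFn fun i => Hmat m (ξ i)).prod *
            Ab * (List.ofFn fun i => Hbmat mb (ξ i)).prod).det *
        (Matrix.of fun i j : Fin n => 1 / (ξ i + ξ j)).det =
      ((1 : Matrix (Fin N) (Fin N) ℝ) + A * Ab).det *
        (Matrix.of fun i j : Fin n =>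
          Efun m mb αb ab A Ab (ξ i) (ξ j) / (ξ i + ξ j)).det :=
  n_shift_determinant_formula_general m mb αb ab A Ab hAb n ξ hdist hsum hm hmb hG

end
end

section
/- Let λ, μ ∈ ℝ with m̄_k ≠ λ and m_k ≠ −μ for all k, and assume 1 + A·Ā is invertible (equivalently 1 + Ā·A is invertible). Then the scalar E_{λμ} factorizes as a sum of two products of quantities each depending on only one of λ, μ: E_{λμ} = (1 − ⟨a|·Ḡ·Ā·|β_λ⟩)·(1 − ⟨ā|·G·A·|β̄_μ⟩) + (⟨ā|·G·|β_λ⟩)·(⟨a|·Ḡ·|β̄_μ⟩). -/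
open Matrix

noncomputable section

/-- The column `|β_ξ⟩ = (M̄ - ξ)⁻¹|α⟩`. -/
def colB {N : ℕ} (mb αv : Fin N → ℝ) (ξ : ℝ) : Fin N → ℝ :=
  Matrix.mulVec (Matrix.diagonal mb - ξ • 1)⁻¹ αv

section AuxForE

section Aux
variable {N : ℕ}

lemma mul_vecMulVec' (B : Matrix (Fin N) (Fin N) ℝ) (u v : Fin N → ℝ) :
    B * Matrix.vecMulVec u v = Matrix.vecMulVec (B.mulVec u) v := by
  ext i j
  simp [Matrix.mul_apply, Matrix.vecMulVec_apply, Matrix.mulVec, dotProduct,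
    Finset.sum_mul, mul_assoc]

lemma vecMulVec_mul' (u v : Fin N → ℝ) (B : Matrix (Fin N) (Fin N) ℝ) :
    Matrix.vecMulVec u v * B = Matrix.vecMulVec u (Matrix.vecMul v B) := by
  ext i j
  simp [Matrix.mul_apply, Matrix.vecMulVec_apply, Matrix.vecMul, dotProduct,
    Finset.mul_sum, mul_assoc]

lemma vecMulVec_mulVec' (u v w : Fin N → ℝ) :
    (Matrix.vecMulVec u v).mulVec w = (v ⬝ᵥ w) • u := by
  ext i
  simp [Matrix.vecMulVec_apply, Matrix.mulVec, dotProduct, Finset.mul_sum, mul_assoc,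
    mul_comm, mul_left_comm]

lemma smul_vecMulVec' (c : ℝ) (u v : Fin N → ℝ) :
    c • Matrix.vecMulVec u v = Matrix.vecMulVec (c • u) v := by
  ext i j; simp [Matrix.vecMulVec_apply, mul_assoc]

lemma vecMulVec_sub' (u w v : Fin N → ℝ) :
    Matrix.vecMulVec (u - w) v = Matrix.vecMulVec u v - Matrix.vecMulVec w v := by
  ext i j; simp [Matrix.vecMulVec_apply, sub_mul]

lemma neg_vecMulVec' (u v : Fin N → ℝ) :
    Matrix.vecMulVec (-u) v = -Matrix.vecMulVec u v := by
  ext i j; simp [Matrix.vecMulVec_apply]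

lemma det_one_add_vecMulVec' (u v : Fin N → ℝ) :
    (1 + Matrix.vecMulVec u v).det = 1 + v ⬝ᵥ u := by
  rw [Matrix.vecMulVec_eq Unit, Matrix.det_one_add_replicateCol_mul_replicateRow]

lemma det_add_vecMulVec' (X : Matrix (Fin N) (Fin N) ℝ) (hX : IsUnit X.det)
    (u v : Fin N → ℝ) :
    (X + Matrix.vecMulVec u v).det = X.det * (1 + v ⬝ᵥ X⁻¹.mulVec u) := by
  have h1 : X + Matrix.vecMulVec u v = X * (1 + Matrix.vecMulVec (X⁻¹.mulVec u) v) := by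
    rw [mul_add, mul_one, mul_vecMulVec', Matrix.mulVec_mulVec, Matrix.mul_nonsing_inv _ hX,
      Matrix.one_mulVec]
  rw [h1, Matrix.det_mul, det_one_add_vecMulVec']

lemma det_add_vecMulVec_two' (X : Matrix (Fin N) (Fin N) ℝ) (hX : IsUnit X.det)
    (u₁ v₁ u₂ v₂ : Fin N → ℝ) :
    (X + Matrix.vecMulVec u₁ v₁ + Matrix.vecMulVec u₂ v₂).det =
      X.det * ((1 + v₁ ⬝ᵥ X⁻¹.mulVec u₁) * (1 + v₂ ⬝ᵥ X⁻¹.mulVec u₂)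
        - (v₁ ⬝ᵥ X⁻¹.mulVec u₂) * (v₂ ⬝ᵥ X⁻¹.mulVec u₁)) := by
  set U : Matrix (Fin N) (Fin 2) ℝ := Matrix.of fun i k => if k = 0 then u₁ i else u₂ i with hU
  set V : Matrix (Fin 2) (Fin N) ℝ := Matrix.of fun k j => if k = 0 then v₁ j else v₂ j with hV
  have hUV : U * V = Matrix.vecMulVec u₁ v₁ + Matrix.vecMulVec u₂ v₂ := by
    ext i j
    simp [hU, hV, Matrix.mul_apply, Fin.sum_univ_two, Matrix.vecMulVec_apply]
  have h1 : X + U * V = X * (1 + (X⁻¹ * U) * V) := by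
    rw [mul_add, mul_one, ← Matrix.mul_assoc, ← Matrix.mul_assoc,
      Matrix.mul_nonsing_inv _ hX, Matrix.one_mul]
  have hent : ∀ (k : Fin 2) (l : Fin 2), (V * (X⁻¹ * U)) k l =
      (if k = 0 then v₁ else v₂) ⬝ᵥ X⁻¹.mulVec (if l = 0 then u₁ else u₂) := by
    intro k l
    by_cases hk : k = 0 <;> by_cases hl : l = 0 <;>
      simp [hk, hl, hU, hV, Matrix.mul_apply, Matrix.mulVec, dotProduct, Finset.mul_sum]
  rw [add_assoc, ← hUV, h1, Matrix.det_mul, Matrix.det_one_add_mul_comm, Matrix.det_fin_two]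
  simp only [Matrix.add_apply, Matrix.one_apply, hent]
  norm_num

end Aux

private theorem E_factorization_aux
    {N : ℕ} (hN : 1 ≤ N) (m mb : Fin N → ℝ)
    (αv αb av ab : Fin N → ℝ)
    (A Ab : Matrix (Fin N) (Fin N) ℝ)
    (hA : Matrix.diagonal mb * A - A * Matrix.diagonal m = Matrix.vecMulVec αv av)
    (hAb : Matrix.diagonal m * Ab - Ab * Matrix.diagonal mb = Matrix.vecMulVec αb ab)
    (lam mu : ℝ) (hmb : ∀ k, mb k ≠ lam) (hm : ∀ k, m k ≠ -mu)
    (hG : IsUnit ((1 : Matrix (Fin N) (Fin N) ℝ) + A * Ab)) :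
    (1 : ℝ) + (lam + mu) *
      (Matrix.vecMul ab (Matrix.diagonal mb - lam • 1)⁻¹ ⬝ᵥ
        Matrix.mulVec (((1 : Matrix (Fin N) (Fin N) ℝ) + A * Ab)⁻¹ * A)
          (Matrix.mulVec (Matrix.diagonal m + mu • 1)⁻¹ αb)) =
      (1 - av ⬝ᵥ Matrix.mulVec
          (((1 : Matrix (Fin N) (Fin N) ℝ) + Ab * A)⁻¹ * Ab)
          (Matrix.mulVec (Matrix.diagonal mb - lam • 1)⁻¹ αv)) *
        (1 - ab ⬝ᵥ Matrix.mulVec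
          (((1 : Matrix (Fin N) (Fin N) ℝ) + A * Ab)⁻¹ * A)
          (Matrix.mulVec (Matrix.diagonal m + mu • 1)⁻¹ αb)) +
      (ab ⬝ᵥ Matrix.mulVec ((1 : Matrix (Fin N) (Fin N) ℝ) + A * Ab)⁻¹
          (Matrix.mulVec (Matrix.diagonal mb - lam • 1)⁻¹ αv)) *
        (av ⬝ᵥ Matrix.mulVec ((1 : Matrix (Fin N) (Fin N) ℝ) + Ab * A)⁻¹
          (Matrix.mulVec (Matrix.diagonal m + mu • 1)⁻¹ αb)) := by
  classical
  set X : Matrix (Fin N) (Fin N) ℝ := 1 + A * Ab with hX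
  set Xb : Matrix (Fin N) (Fin N) ℝ := 1 + Ab * A with hXb
  set D : Matrix (Fin N) (Fin N) ℝ := Matrix.diagonal mb - lam • 1 with hD
  set Dm : Matrix (Fin N) (Fin N) ℝ := Matrix.diagonal m + mu • 1 with hDm
  set Nm : Matrix (Fin N) (Fin N) ℝ := Matrix.diagonal m - lam • 1 with hNm
  -- basic invertibility facts
  have hDdiag : D = Matrix.diagonal (fun k => mb k - lam) := by
    ext i j
    by_cases h : i = j <;> simp [hD, Matrix.one_apply, Matrix.diagonal_apply, h]
  have hDmdiag : Dm = Matrix.diagonal (fun k => m k + mu) := by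
    ext i j
    by_cases h : i = j <;> simp [hDm, Matrix.one_apply, Matrix.diagonal_apply, h]
  have hDdet : IsUnit D.det := by
    rw [hDdiag, Matrix.det_diagonal, isUnit_iff_ne_zero]
    exact Finset.prod_ne_zero_iff.mpr fun k _ => sub_ne_zero_of_ne (hmb k)
  have hDmdet : IsUnit Dm.det := by
    rw [hDmdiag, Matrix.det_diagonal, isUnit_iff_ne_zero]
    refine Finset.prod_ne_zero_iff.mpr fun k _ hk => hm k ?_
    linarith [hk]
  have hXdet : IsUnit X.det := (Matrix.isUnit_iff_isUnit_det X).mp hG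
  have hXbdet : IsUnit Xb.det := by
    rw [hXb, Matrix.det_one_add_mul_comm]; exact hXdet
  -- swap identities
  have hXbAb : Xb * Ab = Ab * X := by rw [hXb, hX]; noncomm_ring
  have hswap : Ab * X⁻¹ = Xb⁻¹ * Ab := by
    have h1 : Xb⁻¹ * (Xb * Ab * X⁻¹) = Ab * X⁻¹ := by
      rw [← Matrix.mul_assoc, ← Matrix.mul_assoc, Matrix.nonsing_inv_mul _ hXbdet,
        Matrix.one_mul]
    have h2 : Xb⁻¹ * (Ab * X * X⁻¹) = Xb⁻¹ * Ab := by
      rw [Matrix.mul_assoc Ab, Matrix.mul_nonsing_inv _ hXdet, Matrix.mul_one]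
    rw [← h1, hXbAb, h2]
  have hAbXA : Ab * X⁻¹ * A = 1 - Xb⁻¹ := by
    rw [hswap, Matrix.mul_assoc]
    have hba : Ab * A = Xb - 1 := by rw [hXb]; abel
    rw [hba, Matrix.mul_sub, Matrix.nonsing_inv_mul _ hXbdet, Matrix.mul_one]
  -- vectors
  set w : Fin N → ℝ := Dm⁻¹.mulVec αb with hw
  set u₁ : Fin N → ℝ := D⁻¹.mulVec αv with hu₁
  set u₂ : Fin N → ℝ := A.mulVec w with hu₂
  set v₁ : Fin N → ℝ := Matrix.vecMul av Ab with hv₁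
  set z : Fin N → ℝ := Matrix.vecMul ab D⁻¹ with hz
  set tt : ℝ := av ⬝ᵥ w with htt
  -- Sylvester-derived identities
  have hDA : D * A = A * Nm + Matrix.vecMulVec αv av := by
    rw [hD, hNm, Matrix.sub_mul, Matrix.mul_sub, Matrix.smul_mul, Matrix.mul_smul,
      Matrix.one_mul, Matrix.mul_one, sub_eq_iff_eq_add.mp hA]
    abel
  have hAbD : Ab * D = Nm * Ab - Matrix.vecMulVec αb ab := by
    rw [hD, hNm, Matrix.mul_sub, Matrix.sub_mul, Matrix.mul_smul, Matrix.smul_mul,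
      Matrix.mul_one, Matrix.one_mul, sub_eq_iff_eq_add.mp hAb]
    abel
  have hNmDm : Nm = Dm - (lam + mu) • (1 : Matrix (Fin N) (Fin N) ℝ) := by
    rw [hNm, hDm, add_smul]; abel
  -- mulVec facts
  have hDu₁ : D.mulVec u₁ = αv := by
    rw [hu₁, Matrix.mulVec_mulVec, Matrix.mul_nonsing_inv _ hDdet, Matrix.one_mulVec]
  have hDmw : Dm.mulVec w = αb := by
    rw [hw, Matrix.mulVec_mulVec, Matrix.mul_nonsing_inv _ hDmdet, Matrix.one_mulVec]
  have hzD : Matrix.vecMul z D = ab := by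
    rw [hz, Matrix.vecMul_vecMul, Matrix.nonsing_inv_mul _ hDdet, Matrix.vecMul_one]
  -- the two corrected matrices
  set R : Matrix (Fin N) (Fin N) ℝ :=
    X - Matrix.vecMulVec u₁ v₁ - Matrix.vecMulVec (u₂ - tt • u₁) ab with hR
  set L : Matrix (Fin N) (Fin N) ℝ :=
    X + (lam + mu) • Matrix.vecMulVec u₂ z with hL
  have hDu₂' : D.mulVec (u₂ - tt • u₁) = (A * Nm).mulVec w := by
    have h1 : D.mulVec u₂ = (D * A).mulVec w := by
      rw [hu₂, Matrix.mulVec_mulVec]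
    rw [Matrix.mulVec_sub, Matrix.mulVec_smul, hDu₁, h1, hDA, Matrix.add_mulVec,
      vecMulVec_mulVec', ← htt]
    abel
  -- key conjugation identity
  have hkey : D * R = L * D := by
    have hDX : D * X = D + A * Nm * Ab + Matrix.vecMulVec αv v₁ := by
      rw [hX, Matrix.mul_add, Matrix.mul_one, ← Matrix.mul_assoc, hDA, Matrix.add_mul,
        vecMulVec_mul', ← hv₁]
      abel
    have hXD : X * D = D + A * Nm * Ab - Matrix.vecMulVec (A.mulVec αb) ab := by
      rw [hX, Matrix.add_mul, Matrix.one_mul, Matrix.mul_assoc, hAbD, Matrix.mul_sub,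
        mul_vecMulVec', ← Matrix.mul_assoc]
      abel
    have hfin : (lam + mu) • Matrix.vecMulVec u₂ ab =
        Matrix.vecMulVec (A.mulVec αb) ab - Matrix.vecMulVec ((A * Nm).mulVec w) ab := by
      have hNw : Nm.mulVec w = αb - (lam + mu) • w := by
        rw [hNmDm, Matrix.sub_mulVec, Matrix.smul_mulVec, Matrix.one_mulVec, hDmw]
      have harg : (lam + mu) • u₂ = A.mulVec αb - (A * Nm).mulVec w := by
        rw [← Matrix.mulVec_mulVec, hNw, Matrix.mulVec_sub, Matrix.mulVec_smul, ← hu₂]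
        abel
      rw [← vecMulVec_sub', smul_vecMulVec', harg]
    rw [hR, hL, Matrix.mul_sub, Matrix.mul_sub, Matrix.add_mul, Matrix.smul_mul,
      mul_vecMulVec', mul_vecMulVec', hDu₁, hDu₂', vecMulVec_mul', hzD, hDX, hXD, hfin]
    abel
  -- determinants
  have hdetRL : R.det = L.det := by
    have h := congrArg Matrix.det hkey
    rw [Matrix.det_mul, Matrix.det_mul] at h
    exact mul_left_cancel₀ hDdet.ne_zero (h.trans (mul_comm _ _))
  have hdetL : L.det = X.det * (1 + (lam + mu) * (z ⬝ᵥ X⁻¹.mulVec u₂)) := by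
    rw [hL, smul_vecMulVec', det_add_vecMulVec' X hXdet, Matrix.mulVec_smul,
      dotProduct_smul, smul_eq_mul]
  have hRalt : R = X + Matrix.vecMulVec (-u₁) v₁ + Matrix.vecMulVec (-(u₂ - tt • u₁)) ab := by
    rw [hR, neg_vecMulVec', neg_vecMulVec']
    abel
  have hdetR : R.det = X.det *
      ((1 - v₁ ⬝ᵥ X⁻¹.mulVec u₁) * (1 - (ab ⬝ᵥ X⁻¹.mulVec u₂ - tt * (ab ⬝ᵥ X⁻¹.mulVec u₁)))
        - (v₁ ⬝ᵥ X⁻¹.mulVec u₂ - tt * (v₁ ⬝ᵥ X⁻¹.mulVec u₁)) * (ab ⬝ᵥ X⁻¹.mulVec u₁)) := by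
    rw [hRalt, det_add_vecMulVec_two' X hXdet]
    simp only [Matrix.mulVec_neg, Matrix.mulVec_sub, Matrix.mulVec_smul, dotProduct_neg,
      dotProduct_sub, dotProduct_smul, smul_eq_mul]
    ring_nf
  -- scalar reductions
  have hb2 : v₁ ⬝ᵥ X⁻¹.mulVec u₂ = tt - av ⬝ᵥ Xb⁻¹.mulVec w := by
    have e1 : v₁ ⬝ᵥ X⁻¹.mulVec u₂ = av ⬝ᵥ (Ab * X⁻¹ * A).mulVec w := by
      rw [hv₁, hu₂, ← Matrix.dotProduct_mulVec, Matrix.mulVec_mulVec, Matrix.mulVec_mulVec]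
    rw [e1, hAbXA, Matrix.sub_mulVec, Matrix.one_mulVec, dotProduct_sub, ← htt]
  have hp : v₁ ⬝ᵥ X⁻¹.mulVec u₁ = av ⬝ᵥ (Xb⁻¹ * Ab).mulVec u₁ := by
    have e1 : v₁ ⬝ᵥ X⁻¹.mulVec u₁ = av ⬝ᵥ ((Ab * X⁻¹) * D⁻¹).mulVec αv := by
      rw [hv₁, hu₁, ← Matrix.dotProduct_mulVec, Matrix.mulVec_mulVec, Matrix.mulVec_mulVec]
    rw [e1, hswap, hu₁, Matrix.mulVec_mulVec]
  have hq : ab ⬝ᵥ X⁻¹.mulVec u₂ = ab ⬝ᵥ (X⁻¹ * A).mulVec w := by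
    rw [hu₂, Matrix.mulVec_mulVec]
  -- main scalar identity
  have hmain : 1 + (lam + mu) * (z ⬝ᵥ X⁻¹.mulVec u₂) =
      (1 - av ⬝ᵥ (Xb⁻¹ * Ab).mulVec u₁) * (1 - ab ⬝ᵥ (X⁻¹ * A).mulVec w) +
        (ab ⬝ᵥ X⁻¹.mulVec u₁) * (av ⬝ᵥ Xb⁻¹.mulVec w) := by
    have h := hdetRL.symm.trans hdetR
    rw [hdetL] at h
    have h2 := mul_left_cancel₀ hXdet.ne_zero h
    rw [hb2, hp, hq] at h2
    rw [h2]; ring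
  -- conclude
  have hEz : z ⬝ᵥ (X⁻¹ * A).mulVec w = z ⬝ᵥ X⁻¹.mulVec u₂ := by
    rw [hu₂, ← Matrix.mulVec_mulVec]
  rw [hEz]
  exact hmain

end AuxForE

theorem E_factorization
    {N : ℕ} (hN : 1 ≤ N) (m mb : Fin N → ℝ)
    (αv αb av ab : Fin N → ℝ)
    (A Ab : Matrix (Fin N) (Fin N) ℝ)
    (hA : Matrix.diagonal mb * A - A * Matrix.diagonal m = Matrix.vecMulVec αv av)
    (hAb : Matrix.diagonal m * Ab - Ab * Matrix.diagonal mb = Matrix.vecMulVec αb ab)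
    (lam mu : ℝ) (hmb : ∀ k, mb k ≠ lam) (hm : ∀ k, m k ≠ -mu)
    (hG : IsUnit ((1 : Matrix (Fin N) (Fin N) ℝ) + A * Ab)) :
    Efun m mb αb ab A Ab lam mu =
      (1 - av ⬝ᵥ Matrix.mulVec
          (((1 : Matrix (Fin N) (Fin N) ℝ) + Ab * A)⁻¹ * Ab) (colB mb αv lam)) *
        (1 - ab ⬝ᵥ Matrix.mulVec
          (((1 : Matrix (Fin N) (Fin N) ℝ) + A * Ab)⁻¹ * A) (colBb m αb mu)) +
      (ab ⬝ᵥ Matrix.mulVec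
          ((1 : Matrix (Fin N) (Fin N) ℝ) + A * Ab)⁻¹ (colB mb αv lam)) *
        (av ⬝ᵥ Matrix.mulVec
          ((1 : Matrix (Fin N) (Fin N) ℝ) + Ab * A)⁻¹ (colBb m αb mu)) := by
  have h := E_factorization_aux hN m mb αv αb av ab A Ab hA hAb lam mu hmb hm hG
  simpa only [Efun, rowB, colBb, colB] using h

end
end

section
/- Let n ≥ 3, let ξ_1,…,ξ_n be reals with ξ_j ≠ m̄_k for all j,k, let η_1,…,η_n be reals with η_j ≠ −m_k for all j,k, and assume 1 + A·Ā is invertible. Then the n×n matrix with entries E_{ξ_j η_k} has vanishing determinant: det[(E_{ξ_j η_k})_{j,k=1..n}] = 0. -/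
open Matrix

noncomputable section

/- ## Auxiliary lemmas -/

lemma my_vecMul_smulMat {N : ℕ} (v : Fin N → ℝ) (a : ℝ) (A : Matrix (Fin N) (Fin N) ℝ) :
    v ᵥ* (a • A) = a • (v ᵥ* A) := by
  ext i
  simp only [Matrix.vecMul, dotProduct, Matrix.smul_apply, Pi.smul_apply,
    smul_eq_mul, Finset.mul_sum]
  exact Finset.sum_congr rfl fun _ _ => by ring

lemma my_vecMulVec_mulVec {N : ℕ} (u v w : Fin N → ℝ) :
    (Matrix.vecMulVec u v) *ᵥ w = (v ⬝ᵥ w) • u := by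
  ext i
  simp only [Matrix.mulVec, dotProduct, Matrix.vecMulVec_apply, Pi.smul_apply,
    smul_eq_mul, Finset.sum_mul]
  exact Finset.sum_congr rfl fun _ _ => by ring

lemma my_sandwich {N : ℕ} (b β u v : Fin N → ℝ) (U W : Matrix (Fin N) (Fin N) ℝ) :
    b ⬝ᵥ ((U * Matrix.vecMulVec u v * W) *ᵥ β) = (b ⬝ᵥ (U *ᵥ u)) * ((v ᵥ* W) ⬝ᵥ β) := by
  rw [show U * Matrix.vecMulVec u v * W = U * (Matrix.vecMulVec u v * W) from by
    rw [Matrix.mul_assoc]]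
  rw [← Matrix.mulVec_mulVec, ← Matrix.mulVec_mulVec, my_vecMulVec_mulVec,
    Matrix.mulVec_smul, dotProduct_smul, ← Matrix.dotProduct_mulVec,
    smul_eq_mul]
  ring

/-- The key rank-two factorization of `Efun`. -/
lemma Efun_factor {N : ℕ} (m mb : Fin N → ℝ) (αv αb av ab : Fin N → ℝ)
    (A Ab : Matrix (Fin N) (Fin N) ℝ)
    (hA : Matrix.diagonal mb * A - A * Matrix.diagonal m = Matrix.vecMulVec αv av)
    (hAb : Matrix.diagonal m * Ab - Ab * Matrix.diagonal mb = Matrix.vecMulVec αb ab)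
    (hG : IsUnit ((1 : Matrix (Fin N) (Fin N) ℝ) + A * Ab))
    (ξ η : ℝ) (hξ : ∀ k, ξ ≠ mb k) (hη : ∀ k, η ≠ -m k) :
    Efun m mb αb ab A Ab ξ η =
      (1 + rowB mb ab ξ ⬝ᵥ ((((1 : Matrix (Fin N) (Fin N) ℝ) + A * Ab)⁻¹ * A) *ᵥ αb)) *
        (1 - ab ⬝ᵥ ((((1 : Matrix (Fin N) (Fin N) ℝ) + A * Ab)⁻¹ * A) *ᵥ colBb m αb η)) +
      (rowB mb ab ξ ⬝ᵥ (((1 : Matrix (Fin N) (Fin N) ℝ) + A * Ab)⁻¹ *ᵥ αv)) *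
        ((av ᵥ* ((1 : Matrix (Fin N) (Fin N) ℝ) + Ab * A)⁻¹) ⬝ᵥ colBb m αb η) := by
  set M := Matrix.diagonal m with hMdef
  set Mb := Matrix.diagonal mb with hMbdef
  set G := ((1 : Matrix (Fin N) (Fin N) ℝ) + A * Ab)⁻¹ with hGdef
  set Gb := ((1 : Matrix (Fin N) (Fin N) ℝ) + Ab * A)⁻¹ with hGbdef
  -- invertibility facts
  have hSdet : IsUnit ((1 : Matrix (Fin N) (Fin N) ℝ) + A * Ab).det :=
    (Matrix.isUnit_iff_isUnit_det _).mp hG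
  have hSbdet : IsUnit ((1 : Matrix (Fin N) (Fin N) ℝ) + Ab * A).det := by
    have := Matrix.det_one_add_mul_comm Ab A
    rw [this]; exact hSdet
  have hGS : G * ((1 : Matrix (Fin N) (Fin N) ℝ) + A * Ab) = 1 :=
    Matrix.nonsing_inv_mul _ hSdet
  have hSG : ((1 : Matrix (Fin N) (Fin N) ℝ) + A * Ab) * G = 1 :=
    Matrix.mul_nonsing_inv _ hSdet
  have hGbSb : Gb * ((1 : Matrix (Fin N) (Fin N) ℝ) + Ab * A) = 1 :=
    Matrix.nonsing_inv_mul _ hSbdet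
  have hSbGb : ((1 : Matrix (Fin N) (Fin N) ℝ) + Ab * A) * Gb = 1 :=
    Matrix.mul_nonsing_inv _ hSbdet
  -- G * A = A * Gb
  have hGA : G * A = A * Gb := by
    calc G * A = G * (A * (((1 : Matrix (Fin N) (Fin N) ℝ) + Ab * A) * Gb)) := by
          rw [hSbGb, Matrix.mul_one]
      _ = (G * ((1 : Matrix (Fin N) (Fin N) ℝ) + A * Ab)) * (A * Gb) := by noncomm_ring
      _ = A * Gb := by rw [hGS, Matrix.one_mul]
  -- Ab * (G * A) = 1 - Gb
  have hAbGA : Ab * (G * A) = 1 - Gb := by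
    rw [hGA]
    calc Ab * (A * Gb) = ((1 : Matrix (Fin N) (Fin N) ℝ) + Ab * A) * Gb - Gb := by
          noncomm_ring
      _ = 1 - Gb := by rw [hSbGb]
  -- commutator of Mb with 1 + A*Ab
  have hR : Mb * ((1 : Matrix (Fin N) (Fin N) ℝ) + A * Ab) -
      ((1 : Matrix (Fin N) (Fin N) ℝ) + A * Ab) * Mb =
      A * Matrix.vecMulVec αb ab + Matrix.vecMulVec αv av * Ab := by
    have h1 : Mb * ((1 : Matrix (Fin N) (Fin N) ℝ) + A * Ab) -
        ((1 : Matrix (Fin N) (Fin N) ℝ) + A * Ab) * Mb =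
        A * (M * Ab - Ab * Mb) + (Mb * A - A * M) * Ab := by noncomm_ring
    rw [h1, hA, hAb]
  -- commutator of Mb with G
  have hMbG : Mb * G - G * Mb =
      -(G * (A * Matrix.vecMulVec αb ab + Matrix.vecMulVec αv av * Ab) * G) := by
    calc Mb * G - G * Mb
        = (G * ((1 : Matrix (Fin N) (Fin N) ℝ) + A * Ab)) * (Mb * G) -
            (G * Mb) * (((1 : Matrix (Fin N) (Fin N) ℝ) + A * Ab) * G) := by
          rw [hGS, hSG, Matrix.one_mul, Matrix.mul_one]
      _ = -(G * ((Mb * ((1 : Matrix (Fin N) (Fin N) ℝ) + A * Ab) -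
            ((1 : Matrix (Fin N) (Fin N) ℝ) + A * Ab) * Mb) * G)) := by noncomm_ring
      _ = -(G * (A * Matrix.vecMulVec αb ab + Matrix.vecMulVec αv av * Ab) * G) := by
          rw [hR]; noncomm_ring
  -- the key commutator identity
  have key : Mb * (G * A) - (G * A) * M =
      G * Matrix.vecMulVec αv av * Gb - (G * A) * Matrix.vecMulVec αb ab * (G * A) := by
    have e3 : Mb * (G * A) - (G * A) * M =
        (Mb * G - G * Mb) * A + G * (Mb * A - A * M) := by noncomm_ring
    rw [e3, hMbG, hA]
    have e4 : -(G * (A * Matrix.vecMulVec αb ab + Matrix.vecMulVec αv av * Ab) * G) * A +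
        G * Matrix.vecMulVec αv av =
        G * Matrix.vecMulVec αv av - (G * A) * Matrix.vecMulVec αb ab * (G * A) -
          G * Matrix.vecMulVec αv av * (Ab * (G * A)) := by noncomm_ring
    rw [e4, hAbGA]
    noncomm_ring
  -- diagonal matrix facts for ξ
  have hDξ : Mb - ξ • (1 : Matrix (Fin N) (Fin N) ℝ) =
      Matrix.diagonal (fun k => mb k - ξ) := by
    ext i j
    by_cases h : i = j <;>
      simp [h, Matrix.sub_apply, Matrix.diagonal_apply, Matrix.one_apply, hMbdef]
  have hdetξ : IsUnit (Mb - ξ • (1 : Matrix (Fin N) (Fin N) ℝ)).det := by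
    rw [hDξ, Matrix.det_diagonal]
    exact isUnit_iff_ne_zero.mpr (Finset.prod_ne_zero_iff.mpr fun k _ =>
      sub_ne_zero.mpr fun h => hξ k h.symm)
  have hQD : (Mb - ξ • (1 : Matrix (Fin N) (Fin N) ℝ))⁻¹ *
      (Mb - ξ • (1 : Matrix (Fin N) (Fin N) ℝ)) = 1 :=
    Matrix.nonsing_inv_mul _ hdetξ
  set b := rowB mb ab ξ with hbdef
  have hbMb : b ᵥ* Mb = ab + ξ • b := by
    have hQMb : (Mb - ξ • (1 : Matrix (Fin N) (Fin N) ℝ))⁻¹ * Mb =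
        1 + ξ • (Mb - ξ • (1 : Matrix (Fin N) (Fin N) ℝ))⁻¹ := by
      calc (Mb - ξ • (1 : Matrix (Fin N) (Fin N) ℝ))⁻¹ * Mb
          = (Mb - ξ • (1 : Matrix (Fin N) (Fin N) ℝ))⁻¹ *
              ((Mb - ξ • (1 : Matrix (Fin N) (Fin N) ℝ)) +
                ξ • (1 : Matrix (Fin N) (Fin N) ℝ)) := by congr 1; abel
        _ = 1 + ξ • (Mb - ξ • (1 : Matrix (Fin N) (Fin N) ℝ))⁻¹ := by
            rw [Matrix.mul_add, hQD, Matrix.mul_smul, Matrix.mul_one]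
    show (ab ᵥ* (Mb - ξ • (1 : Matrix (Fin N) (Fin N) ℝ))⁻¹) ᵥ* Mb = _
    rw [Matrix.vecMul_vecMul, hQMb, Matrix.vecMul_add, Matrix.vecMul_one, my_vecMul_smulMat]
    rfl
  -- diagonal matrix facts for η
  have hDη : M + η • (1 : Matrix (Fin N) (Fin N) ℝ) =
      Matrix.diagonal (fun k => m k + η) := by
    ext i j
    by_cases h : i = j <;>
      simp [h, Matrix.add_apply, Matrix.diagonal_apply, Matrix.one_apply, hMdef]
  have hdetη : IsUnit (M + η • (1 : Matrix (Fin N) (Fin N) ℝ)).det := by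
    rw [hDη, Matrix.det_diagonal]
    exact isUnit_iff_ne_zero.mpr (Finset.prod_ne_zero_iff.mpr fun k _ => by
      intro h
      exact hη k (by linarith))
  have hDP : (M + η • (1 : Matrix (Fin N) (Fin N) ℝ)) *
      (M + η • (1 : Matrix (Fin N) (Fin N) ℝ))⁻¹ = 1 :=
    Matrix.mul_nonsing_inv _ hdetη
  set β := colBb m αb η with hβdef
  have hMβ : M *ᵥ β = αb - η • β := by
    have hMP : M * (M + η • (1 : Matrix (Fin N) (Fin N) ℝ))⁻¹ =
        1 - η • (M + η • (1 : Matrix (Fin N) (Fin N) ℝ))⁻¹ := by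
      calc M * (M + η • (1 : Matrix (Fin N) (Fin N) ℝ))⁻¹
          = ((M + η • (1 : Matrix (Fin N) (Fin N) ℝ)) -
              η • (1 : Matrix (Fin N) (Fin N) ℝ)) *
              (M + η • (1 : Matrix (Fin N) (Fin N) ℝ))⁻¹ := by congr 1; abel
        _ = 1 - η • (M + η • (1 : Matrix (Fin N) (Fin N) ℝ))⁻¹ := by
            rw [Matrix.sub_mul, hDP, Matrix.smul_mul, Matrix.one_mul]
    show M *ᵥ ((M + η • (1 : Matrix (Fin N) (Fin N) ℝ))⁻¹ *ᵥ αb) = _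
    rw [Matrix.mulVec_mulVec, hMP, Matrix.sub_mulVec, Matrix.one_mulVec,
      Matrix.smul_mulVec]
    rfl
  -- step 1
  have step1 : b ⬝ᵥ ((Mb * (G * A) - (G * A) * M) *ᵥ β) =
      (ξ + η) * (b ⬝ᵥ ((G * A) *ᵥ β)) + (ab ⬝ᵥ ((G * A) *ᵥ β)) - (b ⬝ᵥ ((G * A) *ᵥ αb)) := by
    rw [Matrix.sub_mulVec, dotProduct_sub,
      ← Matrix.mulVec_mulVec β Mb (G * A), ← Matrix.mulVec_mulVec β (G * A) M,
      Matrix.dotProduct_mulVec b Mb _, hbMb, hMβ,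
      add_dotProduct, smul_dotProduct,
      Matrix.mulVec_sub, Matrix.mulVec_smul, dotProduct_sub, dotProduct_smul,
      smul_eq_mul, smul_eq_mul]
    ring
  -- step 2
  have step2 : b ⬝ᵥ ((Mb * (G * A) - (G * A) * M) *ᵥ β) =
      (b ⬝ᵥ (G *ᵥ αv)) * ((av ᵥ* Gb) ⬝ᵥ β) -
        (b ⬝ᵥ ((G * A) *ᵥ αb)) * (ab ⬝ᵥ ((G * A) *ᵥ β)) := by
    rw [key, Matrix.sub_mulVec, dotProduct_sub, my_sandwich, my_sandwich,
      Matrix.dotProduct_mulVec ab (((1 : Matrix (Fin N) (Fin N) ℝ) + A * Ab)⁻¹ * A) β]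
  have h5 : (ξ + η) * (b ⬝ᵥ ((G * A) *ᵥ β)) =
      (b ⬝ᵥ (G *ᵥ αv)) * ((av ᵥ* Gb) ⬝ᵥ β) -
        (b ⬝ᵥ ((G * A) *ᵥ αb)) * (ab ⬝ᵥ ((G * A) *ᵥ β)) -
        (ab ⬝ᵥ ((G * A) *ᵥ β)) + (b ⬝ᵥ ((G * A) *ᵥ αb)) := by
    rw [← step2, step1]; ring
  show (1 : ℝ) + (ξ + η) * (b ⬝ᵥ ((G * A) *ᵥ β)) = _
  rw [h5]
  ring

theorem E_matrix_det_vanishes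
    {N : ℕ} (hN : 1 ≤ N) (m mb : Fin N → ℝ)
    (αv αb av ab : Fin N → ℝ)
    (A Ab : Matrix (Fin N) (Fin N) ℝ)
    (hA : Matrix.diagonal mb * A - A * Matrix.diagonal m = Matrix.vecMulVec αv av)
    (hAb : Matrix.diagonal m * Ab - Ab * Matrix.diagonal mb = Matrix.vecMulVec αb ab)
    (n : ℕ) (hn : 3 ≤ n) (ξ η : Fin n → ℝ)
    (hξ : ∀ j k, ξ j ≠ mb k) (hη : ∀ j k, η j ≠ -m k)
    (hG : IsUnit ((1 : Matrix (Fin N) (Fin N) ℝ) + A * Ab)) :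
    (Matrix.of fun j k : Fin n => Efun m mb αb ab A Ab (ξ j) (η k)).det = 0 := by
  classical
  set X := ((1 : Matrix (Fin N) (Fin N) ℝ) + A * Ab)⁻¹ * A with hXdef
  set f : Fin n → ℝ := fun j => 1 + rowB mb ab (ξ j) ⬝ᵥ (X *ᵥ αb) with hfdef
  set g : Fin n → ℝ := fun k => 1 - ab ⬝ᵥ (X *ᵥ colBb m αb (η k)) with hgdef
  set p : Fin n → ℝ := fun j =>
    rowB mb ab (ξ j) ⬝ᵥ (((1 : Matrix (Fin N) (Fin N) ℝ) + A * Ab)⁻¹ *ᵥ αv) with hpdef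
  set q : Fin n → ℝ := fun k =>
    (av ᵥ* ((1 : Matrix (Fin N) (Fin N) ℝ) + Ab * A)⁻¹) ⬝ᵥ colBb m αb (η k) with hqdef
  have hfact : ∀ j k, Efun m mb αb ab A Ab (ξ j) (η k) = f j * g k + p j * q k := by
    intro j k
    exact Efun_factor m mb αv αb av ab A Ab hA hAb hG (ξ j) (η k) (hξ j) (hη k)
  -- find a nonzero vector orthogonal to both f and p
  obtain ⟨c, hc1, hc2, hc0⟩ : ∃ c : Fin n → ℝ, c ⬝ᵥ f = 0 ∧ c ⬝ᵥ p = 0 ∧ c ≠ 0 := by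
    let φ : (Fin n → ℝ) →ₗ[ℝ] ℝ × ℝ :=
      { toFun := fun c => (c ⬝ᵥ f, c ⬝ᵥ p)
        map_add' := fun x y => by
          simp [add_dotProduct, Prod.ext_iff]
        map_smul' := fun r x => by
          simp [smul_dotProduct, Prod.ext_iff] }
    have hker : LinearMap.ker φ ≠ ⊥ := by
      apply LinearMap.ker_ne_bot_of_finrank_lt (f := φ)
      have h1 : Module.finrank ℝ (Fin n → ℝ) = n := by simp
      have h2 : Module.finrank ℝ (ℝ × ℝ) = 2 := by simp
      rw [h1, h2]; omega
    obtain ⟨c, hc, hc0⟩ := (Submodule.ne_bot_iff _).mp hker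
    have hc' : (c ⬝ᵥ f, c ⬝ᵥ p) = (0, 0) := by
      have : φ c = 0 := hc
      simpa [φ, Prod.ext_iff] using this
    exact ⟨c, (Prod.mk.injEq _ _ _ _ ▸ hc').1, (Prod.mk.injEq _ _ _ _ ▸ hc').2, hc0⟩
  rw [← Matrix.exists_vecMul_eq_zero_iff]
  refine ⟨c, hc0, ?_⟩
  ext k
  have hcf : ∑ j, c j * f j = 0 := hc1
  have hcp : ∑ j, c j * p j = 0 := hc2
  calc (c ᵥ* Matrix.of fun j k : Fin n => Efun m mb αb ab A Ab (ξ j) (η k)) k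
      = ∑ j, c j * (f j * g k + p j * q k) := by
        simp only [Matrix.vecMul, dotProduct, Matrix.of_apply]
        exact Finset.sum_congr rfl fun j _ => by rw [hfact j k]
    _ = (∑ j, c j * f j) * g k + (∑ j, c j * p j) * q k := by
        rw [Finset.sum_mul, Finset.sum_mul, ← Finset.sum_add_distrib]
        exact Finset.sum_congr rfl fun j _ => by ring
    _ = 0 := by rw [hcf, hcp]; ring

end
end

section
/- Let ζ, λ, μ be reals with m_k ∉ {−ζ,−μ} and m̄_k ∉ {ζ,λ} for all k, assume 1 + A·Ā is invertible and E_{ζζ} ≠ 0. Then 1 + A·H_ζ·Ā·H̄_ζ is invertible, and with G' = (1 + A·H_ζ·Ā·H̄_ζ)⁻¹ and the shifted scalar E'_{λμ} = 1 + (λ+μ)·⟨ā|·H̄_ζ·(M̄−λ)⁻¹·G'·A·H_ζ·(M+μ)⁻¹·|ᾱ⟩, the recursion (ζ−λ)(ζ−μ)·E_{ζζ}·E'_{λμ} = (ζ+λ)(ζ+μ)·E_{ζζ}·E_{λμ} − 2ζ(λ+μ)·E_{λζ}·E_{ζμ} holds. -/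
open Matrix

noncomputable section

namespace ESR

variable {N : ℕ}

lemma diag_add (m : Fin N → ℝ) (η : ℝ) :
    Matrix.diagonal m + η • (1 : Matrix (Fin N) (Fin N) ℝ)
      = Matrix.diagonal (fun k => m k + η) := by
  rw [Matrix.smul_one_eq_diagonal, Matrix.diagonal_add]

lemma diag_sub (m : Fin N → ℝ) (η : ℝ) :
    Matrix.diagonal m - η • (1 : Matrix (Fin N) (Fin N) ℝ)
      = Matrix.diagonal (fun k => m k - η) := by
  rw [Matrix.smul_one_eq_diagonal, Matrix.diagonal_sub]

lemma inv_diag (v : Fin N → ℝ) (hv : ∀ k, v k ≠ 0) :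
    (Matrix.diagonal v)⁻¹ = Matrix.diagonal (fun k => (v k)⁻¹) := by
  apply Matrix.inv_eq_right_inv
  rw [Matrix.diagonal_mul_diagonal, ← Matrix.diagonal_one]
  rw [Matrix.diagonal_eq_diagonal_iff]
  exact fun k => mul_inv_cancel₀ (hv k)

lemma diag_unit (v : Fin N → ℝ) (hv : ∀ k, v k ≠ 0) :
    IsUnit (Matrix.diagonal v) := by
  have h1 : Matrix.diagonal v * Matrix.diagonal (fun k => (v k)⁻¹) = 1 := by
    rw [Matrix.diagonal_mul_diagonal, ← Matrix.diagonal_one, Matrix.diagonal_eq_diagonal_iff]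
    exact fun k => mul_inv_cancel₀ (hv k)
  exact ⟨⟨_, _, h1, mul_eq_one_comm.mp h1⟩, rfl⟩

lemma mul_vecMulVec (M : Matrix (Fin N) (Fin N) ℝ) (v w : Fin N → ℝ) :
    M * Matrix.vecMulVec v w = Matrix.vecMulVec (M.mulVec v) w := by
  ext i j
  simp [Matrix.mul_apply, Matrix.vecMulVec_apply, Matrix.mulVec, dotProduct,
    Finset.sum_mul, mul_assoc]

lemma vecMulVec_mul (M : Matrix (Fin N) (Fin N) ℝ) (v w : Fin N → ℝ) :
    Matrix.vecMulVec v w * M = Matrix.vecMulVec v (Matrix.vecMul w M) := by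
  ext i j
  simp [Matrix.mul_apply, Matrix.vecMulVec_apply, Matrix.vecMul, dotProduct,
    Finset.mul_sum, mul_assoc]

lemma vecMul_vecMulVec (r v w : Fin N → ℝ) :
    Matrix.vecMul r (Matrix.vecMulVec v w) = (r ⬝ᵥ v) • w := by
  funext j
  simp [Matrix.vecMul, Matrix.vecMulVec_apply, dotProduct, Finset.sum_mul, mul_assoc]

lemma mulVec_vecMulVec (v w x : Fin N → ℝ) :
    (Matrix.vecMulVec v w).mulVec x = (w ⬝ᵥ x) • v := by
  funext i
  simp only [Matrix.mulVec, Matrix.vecMulVec_apply, dotProduct, Pi.smul_apply,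
    smul_eq_mul, Finset.sum_mul]
  exact Finset.sum_congr rfl fun j _ => by ring

lemma vecMulVec_smul_right (v w : Fin N → ℝ) (c : ℝ) :
    Matrix.vecMulVec v (c • w) = c • Matrix.vecMulVec v w := by
  ext i j
  simp [Matrix.vecMulVec_apply]
  ring

lemma vecMul_smul_mat (v : Fin N → ℝ) (c : ℝ) (M : Matrix (Fin N) (Fin N) ℝ) :
    Matrix.vecMul v (c • M) = c • Matrix.vecMul v M := by
  funext j
  simp only [Matrix.vecMul, dotProduct, Matrix.smul_apply, Pi.smul_apply,
    smul_eq_mul, Finset.mul_sum]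
  exact Finset.sum_congr rfl fun i _ => by ring

lemma res_left (mb : Fin N → ℝ) (ζ lam : ℝ) (h1 : ∀ k, mb k - ζ ≠ 0)
    (h2 : ∀ k, mb k - lam ≠ 0) :
    (lam - ζ) • (Hbmat mb ζ * (Matrix.diagonal mb - lam • 1)⁻¹)
      = (lam + ζ) • (Matrix.diagonal mb - lam • (1 : Matrix (Fin N) (Fin N) ℝ))⁻¹
        - (2*ζ) • (Matrix.diagonal mb - ζ • 1)⁻¹ := by
  rw [Hbmat, diag_add, diag_sub, diag_sub, inv_diag _ h1, inv_diag _ h2,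
    Matrix.diagonal_mul_diagonal, Matrix.diagonal_mul_diagonal]
  ext i j
  by_cases hij : i = j
  · subst hij
    simp only [Matrix.smul_apply, Matrix.sub_apply, Matrix.diagonal_apply_eq, smul_eq_mul]
    field_simp [h1 i, h2 i]
    ring
  · simp [Matrix.diagonal_apply_ne _ hij, hij]

lemma res_right (m : Fin N → ℝ) (ζ mu : ℝ) (h1 : ∀ k, m k + ζ ≠ 0)
    (h2 : ∀ k, m k + mu ≠ 0) :
    (mu - ζ) • (Hmat m ζ * (Matrix.diagonal m + mu • 1)⁻¹)
      = (ζ + mu) • (Matrix.diagonal m + mu • (1 : Matrix (Fin N) (Fin N) ℝ))⁻¹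
        - (2*ζ) • (Matrix.diagonal m + ζ • 1)⁻¹ := by
  rw [Hmat, diag_sub, diag_add, diag_add, inv_diag _ h1, inv_diag _ h2,
    Matrix.diagonal_mul_diagonal, Matrix.diagonal_mul_diagonal]
  ext i j
  by_cases hij : i = j
  · subst hij
    simp only [Matrix.smul_apply, Matrix.sub_apply, Matrix.diagonal_apply_eq, smul_eq_mul]
    field_simp [h1 i, h2 i]
    ring
  · simp [Matrix.diagonal_apply_ne _ hij, hij]

lemma HAbH (m mb αb ab : Fin N → ℝ) (Ab : Matrix (Fin N) (Fin N) ℝ)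
    (hAb : Matrix.diagonal m * Ab - Ab * Matrix.diagonal mb = Matrix.vecMulVec αb ab)
    (ζ : ℝ) (h1 : ∀ k, m k + ζ ≠ 0) (h2 : ∀ k, mb k - ζ ≠ 0) :
    Hmat m ζ * Ab * Hbmat mb ζ
      = Ab + (2*ζ) • Matrix.vecMulVec (colBb m αb ζ) (rowB mb ab ζ) := by
  have hDpH : Matrix.diagonal (fun k => m k + ζ) * Hmat m ζ
      = Matrix.diagonal (fun k => m k - ζ) := by
    rw [Hmat, diag_sub, diag_add, inv_diag _ h1, Matrix.diagonal_mul_diagonal,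
      Matrix.diagonal_mul_diagonal, Matrix.diagonal_eq_diagonal_iff]
    intro k
    field_simp [h1 k]
  have hHbD : Hbmat mb ζ * Matrix.diagonal (fun k => mb k - ζ)
      = Matrix.diagonal (fun k => mb k + ζ) := by
    rw [Hbmat, diag_add, diag_sub, inv_diag _ h2, Matrix.diagonal_mul_diagonal,
      Matrix.diagonal_mul_diagonal, Matrix.diagonal_eq_diagonal_iff]
    intro k
    field_simp [h2 k]
  have hcolb : (Matrix.diagonal (fun k => m k + ζ)).mulVec (colBb m αb ζ) = αb := by
    unfold colBb
    rw [diag_add, inv_diag _ h1, Matrix.mulVec_mulVec, Matrix.diagonal_mul_diagonal]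
    have : Matrix.diagonal (fun k => (m k + ζ) * (m k + ζ)⁻¹)
        = (1 : Matrix (Fin N) (Fin N) ℝ) := by
      rw [← Matrix.diagonal_one, Matrix.diagonal_eq_diagonal_iff]
      exact fun k => mul_inv_cancel₀ (h1 k)
    rw [this, Matrix.one_mulVec]
  have hrow : Matrix.vecMul (rowB mb ab ζ) (Matrix.diagonal (fun k => mb k - ζ)) = ab := by
    unfold rowB
    rw [diag_sub, inv_diag _ h2, Matrix.vecMul_vecMul, Matrix.diagonal_mul_diagonal]
    have : Matrix.diagonal (fun k => (mb k - ζ)⁻¹ * (mb k - ζ))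
        = (1 : Matrix (Fin N) (Fin N) ℝ) := by
      rw [← Matrix.diagonal_one, Matrix.diagonal_eq_diagonal_iff]
      exact fun k => inv_mul_cancel₀ (h2 k)
    rw [this, Matrix.vecMul_one]
  have hu1 : IsUnit (Matrix.diagonal (fun k => m k + ζ)) := diag_unit _ h1
  have hu2 : IsUnit (Matrix.diagonal (fun k => mb k - ζ)) := diag_unit _ h2
  apply hu1.mul_left_cancel
  apply hu2.mul_right_cancel
  -- compute LHS
  have eL : Matrix.diagonal (fun k => m k + ζ) * (Hmat m ζ * Ab * Hbmat mb ζ)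
        * Matrix.diagonal (fun k => mb k - ζ)
      = Matrix.diagonal (fun k => m k - ζ) * Ab * Matrix.diagonal (fun k => mb k + ζ) := by
    simp only [← Matrix.mul_assoc]
    rw [hDpH, Matrix.mul_assoc (Matrix.diagonal (fun k => m k - ζ) * Ab), hHbD]
  have eR : Matrix.diagonal (fun k => m k + ζ)
        * (Ab + (2*ζ) • Matrix.vecMulVec (colBb m αb ζ) (rowB mb ab ζ))
        * Matrix.diagonal (fun k => mb k - ζ)
      = Matrix.diagonal (fun k => m k + ζ) * Ab * Matrix.diagonal (fun k => mb k - ζ)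
        + (2*ζ) • Matrix.vecMulVec αb ab := by
    simp only [Matrix.mul_add, Matrix.add_mul, mul_smul_comm, smul_mul_assoc]
    rw [mul_vecMulVec, hcolb, vecMulVec_mul, hrow]
  rw [eL, eR]
  -- now prove the Sylvester-shift identity
  have h1' : Matrix.diagonal m * Ab = Matrix.vecMulVec αb ab + Ab * Matrix.diagonal mb :=
    sub_eq_iff_eq_add.mp hAb
  rw [← diag_sub m ζ, ← diag_add m ζ, ← diag_sub mb ζ, ← diag_add mb ζ]
  simp only [Matrix.sub_mul, Matrix.add_mul, Matrix.mul_sub, Matrix.mul_add,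
    smul_mul_assoc, mul_smul_comm, Matrix.one_mul, Matrix.mul_one, h1']
  module

end ESR

theorem E_shift_recursion
    {N : ℕ} (hN : 1 ≤ N) (m mb : Fin N → ℝ)
    (αv αb av ab : Fin N → ℝ)
    (A Ab : Matrix (Fin N) (Fin N) ℝ)
    (hA : Matrix.diagonal mb * A - A * Matrix.diagonal m = Matrix.vecMulVec αv av)
    (hAb : Matrix.diagonal m * Ab - Ab * Matrix.diagonal mb = Matrix.vecMulVec αb ab)
    (ζ lam mu : ℝ)
    (hm : ∀ k, m k ≠ -ζ ∧ m k ≠ -mu) (hmb : ∀ k, mb k ≠ ζ ∧ mb k ≠ lam)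
    (hG : IsUnit ((1 : Matrix (Fin N) (Fin N) ℝ) + A * Ab))
    (hE : Efun m mb αb ab A Ab ζ ζ ≠ 0) :
    IsUnit ((1 : Matrix (Fin N) (Fin N) ℝ) + A * Hmat m ζ * Ab * Hbmat mb ζ) ∧
    (ζ - lam) * (ζ - mu) * Efun m mb αb ab A Ab ζ ζ *
        (1 + (lam + mu) *
          (Matrix.vecMul ab
              (Hbmat mb ζ * (Matrix.diagonal mb - lam • 1)⁻¹ *
                ((1 : Matrix (Fin N) (Fin N) ℝ) + A * Hmat m ζ * Ab * Hbmat mb ζ)⁻¹ *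
                A * Hmat m ζ * (Matrix.diagonal m + mu • 1)⁻¹) ⬝ᵥ αb)) =
      (ζ + lam) * (ζ + mu) * Efun m mb αb ab A Ab ζ ζ * Efun m mb αb ab A Ab lam mu -
        2 * ζ * (lam + mu) * Efun m mb αb ab A Ab lam ζ * Efun m mb αb ab A Ab ζ mu := by
  classical
  have hpz : ∀ k, m k + ζ ≠ 0 := fun k h => (hm k).1 (by linarith)
  have hpmu : ∀ k, m k + mu ≠ 0 := fun k h => (hm k).2 (by linarith)
  have hbz : ∀ k, mb k - ζ ≠ 0 := fun k h => (hmb k).1 (by linarith)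
  have hbl : ∀ k, mb k - lam ≠ 0 := fun k h => (hmb k).2 (by linarith)
  set K : Matrix (Fin N) (Fin N) ℝ := 1 + A * Ab with hK
  have hdet : IsUnit K.det := (Matrix.isUnit_iff_isUnit_det K).mp hG
  have hKG : K * K⁻¹ = 1 := Matrix.mul_nonsing_inv K hdet
  set w : Fin N → ℝ := rowB mb ab ζ with hw
  set u : Fin N → ℝ := (K⁻¹ * A).mulVec (colBb m αb ζ) with hu
  set p : ℝ → ℝ → ℝ :=
    fun ξ η => rowB mb ab ξ ⬝ᵥ (K⁻¹ * A).mulVec (colBb m αb η) with hp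
  have hEfun : ∀ ξ η, Efun m mb αb ab A Ab ξ η = 1 + (ξ + η) * p ξ η := by
    intro ξ η
    simp only [Efun, hp, hK]
  set EE : ℝ := Efun m mb αb ab A Ab ζ ζ with hEE
  have hEp : EE = 1 + (ζ + ζ) * p ζ ζ := by rw [hEE, hEfun]
  set bb : ℝ := -(2*ζ)/EE with hbbdef
  have hbb : bb * EE = -(2*ζ) := by
    rw [hbbdef]; exact div_mul_cancel₀ _ hE
  have hwu : w ⬝ᵥ u = p ζ ζ := by simp only [hp, hw, hu]
  set V : Matrix (Fin N) (Fin N) ℝ := Matrix.vecMulVec u w with hV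
  have hVV : V * V = (w ⬝ᵥ u) • V := by
    rw [hV, ESR.vecMulVec_mul, ESR.vecMul_vecMulVec, ESR.vecMulVec_smul_right]
  set S : Matrix (Fin N) (Fin N) ℝ := 1 + (2*ζ) • V with hS
  set S' : Matrix (Fin N) (Fin N) ℝ := 1 + bb • V with hS'
  have hc : (2*ζ) + bb + (2*ζ)*bb*(p ζ ζ) = 0 := by
    linear_combination hbb - bb * hEp
  have hSS' : S * S' = 1 := by
    have expand : S * S' = 1 + ((2*ζ) + bb + (2*ζ)*bb*(p ζ ζ)) • V := by
      rw [hS, hS']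
      simp only [Matrix.mul_add, Matrix.add_mul, Matrix.mul_one, Matrix.one_mul,
        smul_mul_assoc, mul_smul_comm, hVV, hwu, smul_smul]
      module
    rw [expand, hc, zero_smul, add_zero]
  set T : Matrix (Fin N) (Fin N) ℝ :=
    (1 : Matrix (Fin N) (Fin N) ℝ) + A * Hmat m ζ * Ab * Hbmat mb ζ with hT
  have hHAbH := ESR.HAbH m mb αb ab Ab hAb ζ hpz hbz
  have hKu : K.mulVec u = A.mulVec (colBb m αb ζ) := by
    rw [hu, Matrix.mulVec_mulVec, ← Matrix.mul_assoc, hKG, Matrix.one_mul]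
  have hTKS : T = K * S := by
    have e1 : A * Hmat m ζ * Ab * Hbmat mb ζ = A * (Hmat m ζ * Ab * Hbmat mb ζ) := by
      simp only [Matrix.mul_assoc]
    rw [hT, hS, Matrix.mul_add, Matrix.mul_one, mul_smul_comm, hV,
      ESR.mul_vecMulVec, hKu, e1, hHAbH, Matrix.mul_add, mul_smul_comm,
      ESR.mul_vecMulVec, ← add_assoc, ← hK]
  have hTinv : T * (S' * K⁻¹) = 1 := by
    rw [hTKS, Matrix.mul_assoc, ← Matrix.mul_assoc S S' K⁻¹, hSS', Matrix.one_mul, hKG]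
  have hunit : IsUnit T := ⟨⟨T, S' * K⁻¹, hTinv, mul_eq_one_comm.mp hTinv⟩, rfl⟩
  have hTi : T⁻¹ = S' * K⁻¹ := Matrix.inv_eq_right_inv hTinv
  refine ⟨hunit, ?_⟩
  set X : Matrix (Fin N) (Fin N) ℝ :=
    Hbmat mb ζ * (Matrix.diagonal mb - lam • 1)⁻¹ * T⁻¹ * A * Hmat m ζ *
      (Matrix.diagonal m + mu • 1)⁻¹ with hX
  set W : Matrix (Fin N) (Fin N) ℝ := T⁻¹ * A with hWdef
  have hW : W = S' * (K⁻¹ * A) := by rw [hWdef, hTi, Matrix.mul_assoc]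
  set Y : ℝ → ℝ → Matrix (Fin N) (Fin N) ℝ :=
    fun ξ η => (Matrix.diagonal mb - ξ • 1)⁻¹ * (W * (Matrix.diagonal m + η • 1)⁻¹) with hY
  have e0 : X = (Hbmat mb ζ * (Matrix.diagonal mb - lam • 1)⁻¹) * W *
      (Hmat m ζ * (Matrix.diagonal m + mu • 1)⁻¹) := by
    rw [hX, hWdef]
    simp only [Matrix.mul_assoc]
  have key : ((lam - ζ)*(mu - ζ)) • X
      = ((lam+ζ)*(ζ+mu)) • Y lam mu - ((lam+ζ)*(2*ζ)) • Y lam ζ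
        - ((2*ζ)*(ζ+mu)) • Y ζ mu + ((2*ζ)*(2*ζ)) • Y ζ ζ := by
    have rl := ESR.res_left mb ζ lam hbz hbl
    have rr := ESR.res_right m ζ mu hpz hpmu
    calc ((lam - ζ)*(mu - ζ)) • X
        = ((lam - ζ) • (Hbmat mb ζ * (Matrix.diagonal mb - lam • 1)⁻¹)) * W *
            ((mu - ζ) • (Hmat m ζ * (Matrix.diagonal m + mu • 1)⁻¹)) := by
          rw [e0]
          simp only [smul_mul_assoc, mul_smul_comm, smul_smul]
          rw [mul_comm (lam - ζ) (mu - ζ)]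
      _ = ((lam + ζ) • (Matrix.diagonal mb - lam • (1 : Matrix (Fin N) (Fin N) ℝ))⁻¹
            - (2*ζ) • (Matrix.diagonal mb - ζ • 1)⁻¹) * W *
          ((ζ + mu) • (Matrix.diagonal m + mu • (1 : Matrix (Fin N) (Fin N) ℝ))⁻¹
            - (2*ζ) • (Matrix.diagonal m + ζ • 1)⁻¹) := by rw [rl, rr]
      _ = ((lam+ζ)*(ζ+mu)) • Y lam mu - ((lam+ζ)*(2*ζ)) • Y lam ζ
            - ((2*ζ)*(ζ+mu)) • Y ζ mu + ((2*ζ)*(2*ζ)) • Y ζ ζ := by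
          simp only [hY]
          simp only [Matrix.sub_mul, Matrix.mul_sub, smul_mul_assoc, mul_smul_comm,
            smul_smul, smul_sub]
          simp only [Matrix.mul_assoc]
          module
  have ht : ∀ ξ η, Matrix.vecMul ab (Y ξ η) ⬝ᵥ αb = p ξ η + bb * (p ζ η * p ξ ζ) := by
    intro ξ η
    have h1 : Matrix.vecMul ab (Y ξ η)
        = Matrix.vecMul (rowB mb ab ξ) (W * (Matrix.diagonal m + η • 1)⁻¹) := by
      simp only [hY]
      rw [← Matrix.vecMul_vecMul]
      rfl
    rw [h1, ← Matrix.dotProduct_mulVec, ← Matrix.mulVec_mulVec, hW,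
      ← Matrix.mulVec_mulVec, hS', Matrix.add_mulVec, Matrix.one_mulVec,
      Matrix.smul_mulVec, hV, ESR.mulVec_vecMulVec, dotProduct_add,
      dotProduct_smul]
    simp only [dotProduct_smul, smul_eq_mul, smul_smul, hp, hu, hw, colBb]
  have h := congrArg (fun Mx : Matrix (Fin N) (Fin N) ℝ => Matrix.vecMul ab Mx ⬝ᵥ αb) key
  simp only [Matrix.vecMul_sub, Matrix.vecMul_add, ESR.vecMul_smul_mat,
    sub_dotProduct, add_dotProduct, smul_dotProduct, smul_eq_mul,
    ht] at h
  rw [hEfun lam mu, hEfun lam ζ, hEfun ζ mu]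
  linear_combination (EE*(lam+mu)) * h
    + ((lam+mu)*((lam+ζ)*(ζ+mu)*(p ζ mu)*(p lam ζ) - 2*ζ*(lam+ζ)*(p ζ ζ)*(p lam ζ)
        - 2*ζ*(ζ+mu)*(p ζ mu)*(p ζ ζ) + 4*ζ^2*(p ζ ζ)^2)) * hbb
    + (-(2*ζ)*(lam+mu)*((lam+ζ)*(p lam ζ) + (ζ+mu)*(p ζ mu) + 1 - 2*ζ*(p ζ ζ))) * hEp

end
end

section
/- Let λ, μ ∈ ℝ with λ ≠ μ and λ ≠ −μ, Γ = (λ+μ)/(λ−μ), and let f₀, k_x, k_y, γ₁, γ₂ be reals. Set f(x,y,n₁,n₂) = f₀ + k_x·x + k_y·y + γ₁·n₁ + γ₂·n₂ and u(x,y,n₁,n₂) = φ(x,y,n₁,n₂) + ln(1 + e^{2f(x,y,n₁,n₂)}). Then for all x,y ∈ ℝ and n₁,n₂ ∈ ℤ: exp(Δ₁u) = Γ²·(1 + sinh²γ₁/cosh²f) and exp(Δ₂u) = Γ⁻²·(1 + sinh²γ₂/cosh²f), where f is evaluated at (x,y,n₁,n₂). -/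
noncomputable section

/-- The background `φ(x,y,n₁,n₂)`. -/
def solPhi (lam mu : ℝ) (x y : ℝ) (n₁ n₂ : ℤ) : ℝ :=
  8 * x * y * (lam * mu * (lam ^ 2 + mu ^ 2) / (lam ^ 2 - mu ^ 2) ^ 2) +
    ((n₁ : ℝ) ^ 2 - (n₂ : ℝ) ^ 2) * Real.log |(lam + mu) / (lam - mu)|

/-- The linear phase `f(x,y,n₁,n₂) = f₀ + kₓx + k_y y + γ₁n₁ + γ₂n₂`. -/
def solF (f₀ kx ky γ₁ γ₂ : ℝ) (x y : ℝ) (n₁ n₂ : ℤ) : ℝ :=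
  f₀ + kx * x + ky * y + γ₁ * (n₁ : ℝ) + γ₂ * (n₂ : ℝ)

/-- The one-soliton function `u = φ + ln(1 + e^{2f})`. -/
def solU (lam mu f₀ kx ky γ₁ γ₂ : ℝ) (x y : ℝ) (n₁ n₂ : ℤ) : ℝ :=
  solPhi lam mu x y n₁ n₂ +
    Real.log (1 + Real.exp (2 * solF f₀ kx ky γ₁ γ₂ x y n₁ n₂))

lemma aux_ratio (f g : ℝ) :
    Real.exp (Real.log (1 + Real.exp (2*(f+g))) - 2*Real.log (1 + Real.exp (2*f)) +
      Real.log (1 + Real.exp (2*(f-g)))) = 1 + Real.sinh g ^ 2 / Real.cosh f ^ 2 := by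
  have hA : (0:ℝ) < 1 + Real.exp (2*(f+g)) := by positivity
  have hB : (0:ℝ) < 1 + Real.exp (2*f) := by positivity
  have hC : (0:ℝ) < 1 + Real.exp (2*(f-g)) := by positivity
  rw [Real.exp_add, Real.exp_sub, Real.exp_log hA, Real.exp_log hC,
    show (2:ℝ)*Real.log (1 + Real.exp (2*f)) = Real.log ((1+Real.exp (2*f))^2) by
      rw [Real.log_pow]; push_cast; ring,
    Real.exp_log (by positivity)]
  have h1 : Real.exp (2*(f+g)) = Real.exp f ^ 2 * Real.exp g ^ 2 := by
    rw [show 2*(f+g) = (f+g)+(f+g) by ring, Real.exp_add, Real.exp_add]; ring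
  have h2 : Real.exp (2*f) = Real.exp f ^ 2 := by
    rw [two_mul, Real.exp_add]; ring
  have h3 : Real.exp (2*(f-g)) = Real.exp f ^ 2 * (Real.exp g)⁻¹ ^ 2 := by
    rw [show 2*(f-g) = (f-g)+(f-g) by ring, Real.exp_add, Real.exp_sub, div_eq_mul_inv]; ring
  rw [Real.sinh_eq, Real.cosh_eq, h1, h2, h3]
  simp only [Real.exp_neg]
  have hu : Real.exp f ≠ 0 := Real.exp_ne_zero f
  have hv : Real.exp g ≠ 0 := Real.exp_ne_zero g
  have hd : Real.exp f + (Real.exp f)⁻¹ ≠ 0 := by positivity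
  field_simp
  ring

theorem one_soliton_second_differences
    (lam mu : ℝ) (h1 : lam ≠ mu) (h2 : lam ≠ -mu)
    (f₀ kx ky γ₁ γ₂ : ℝ) :
    ∀ (x y : ℝ) (n₁ n₂ : ℤ),
      Real.exp (solU lam mu f₀ kx ky γ₁ γ₂ x y (n₁ + 1) n₂ -
          2 * solU lam mu f₀ kx ky γ₁ γ₂ x y n₁ n₂ +
          solU lam mu f₀ kx ky γ₁ γ₂ x y (n₁ - 1) n₂) =
        ((lam + mu) / (lam - mu)) ^ 2 *
          (1 + Real.sinh γ₁ ^ 2 / Real.cosh (solF f₀ kx ky γ₁ γ₂ x y n₁ n₂) ^ 2) ∧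
      Real.exp (solU lam mu f₀ kx ky γ₁ γ₂ x y n₁ (n₂ + 1) -
          2 * solU lam mu f₀ kx ky γ₁ γ₂ x y n₁ n₂ +
          solU lam mu f₀ kx ky γ₁ γ₂ x y n₁ (n₂ - 1)) =
        ((lam + mu) / (lam - mu)) ^ (-2 : ℤ) *
          (1 + Real.sinh γ₂ ^ 2 / Real.cosh (solF f₀ kx ky γ₁ γ₂ x y n₁ n₂) ^ 2) := by
  intro x y n₁ n₂
  have hnum : lam + mu ≠ 0 := fun h => h2 (by linarith)
  have hden : lam - mu ≠ 0 := sub_ne_zero.mpr h1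
  have hΓ : (lam + mu) / (lam - mu) ≠ 0 := div_ne_zero hnum hden
  have hexpL : Real.exp (2 * Real.log |(lam + mu) / (lam - mu)|) =
      ((lam + mu) / (lam - mu)) ^ 2 := by
    rw [two_mul, Real.exp_add, Real.exp_log (abs_pos.mpr hΓ), abs_mul_abs_self, sq]
  have hexpL' : Real.exp (-(2 * Real.log |(lam + mu) / (lam - mu)|)) =
      ((lam + mu) / (lam - mu)) ^ (-2 : ℤ) := by
    rw [Real.exp_neg, hexpL, zpow_neg]
    norm_cast
  constructor
  · have e1 : solF f₀ kx ky γ₁ γ₂ x y (n₁ + 1) n₂ =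
        solF f₀ kx ky γ₁ γ₂ x y n₁ n₂ + γ₁ := by
      simp only [solF]; push_cast; ring
    have e2 : solF f₀ kx ky γ₁ γ₂ x y (n₁ - 1) n₂ =
        solF f₀ kx ky γ₁ γ₂ x y n₁ n₂ - γ₁ := by
      simp only [solF]; push_cast; ring
    have p1 : solPhi lam mu x y (n₁ + 1) n₂ - 2 * solPhi lam mu x y n₁ n₂ +
        solPhi lam mu x y (n₁ - 1) n₂ = 2 * Real.log |(lam + mu) / (lam - mu)| := by
      simp only [solPhi]; push_cast; ring
    have key : solU lam mu f₀ kx ky γ₁ γ₂ x y (n₁ + 1) n₂ -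
        2 * solU lam mu f₀ kx ky γ₁ γ₂ x y n₁ n₂ +
        solU lam mu f₀ kx ky γ₁ γ₂ x y (n₁ - 1) n₂ =
        2 * Real.log |(lam + mu) / (lam - mu)| +
          (Real.log (1 + Real.exp (2 * (solF f₀ kx ky γ₁ γ₂ x y n₁ n₂ + γ₁))) -
            2 * Real.log (1 + Real.exp (2 * solF f₀ kx ky γ₁ γ₂ x y n₁ n₂)) +
            Real.log (1 + Real.exp (2 * (solF f₀ kx ky γ₁ γ₂ x y n₁ n₂ - γ₁)))) := by
      simp only [solU, e1, e2]; linarith [p1]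
    rw [key, Real.exp_add, aux_ratio, hexpL]
  · have e1 : solF f₀ kx ky γ₁ γ₂ x y n₁ (n₂ + 1) =
        solF f₀ kx ky γ₁ γ₂ x y n₁ n₂ + γ₂ := by
      simp only [solF]; push_cast; ring
    have e2 : solF f₀ kx ky γ₁ γ₂ x y n₁ (n₂ - 1) =
        solF f₀ kx ky γ₁ γ₂ x y n₁ n₂ - γ₂ := by
      simp only [solF]; push_cast; ring
    have p1 : solPhi lam mu x y n₁ (n₂ + 1) - 2 * solPhi lam mu x y n₁ n₂ +
        solPhi lam mu x y n₁ (n₂ - 1) = -(2 * Real.log |(lam + mu) / (lam - mu)|) := by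
      simp only [solPhi]; push_cast; ring
    have key : solU lam mu f₀ kx ky γ₁ γ₂ x y n₁ (n₂ + 1) -
        2 * solU lam mu f₀ kx ky γ₁ γ₂ x y n₁ n₂ +
        solU lam mu f₀ kx ky γ₁ γ₂ x y n₁ (n₂ - 1) =
        -(2 * Real.log |(lam + mu) / (lam - mu)|) +
          (Real.log (1 + Real.exp (2 * (solF f₀ kx ky γ₁ γ₂ x y n₁ n₂ + γ₂))) -
            2 * Real.log (1 + Real.exp (2 * solF f₀ kx ky γ₁ γ₂ x y n₁ n₂)) +
            Real.log (1 + Real.exp (2 * (solF f₀ kx ky γ₁ γ₂ x y n₁ n₂ - γ₂)))) := by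
      simp only [solU, e1, e2]; linarith [p1]
    rw [key, Real.exp_add, aux_ratio, hexpL']

end
end

section
/- Let λ, μ ∈ ℝ with λ ≠ μ and λ ≠ −μ, Γ = (λ+μ)/(λ−μ), and let f₀, k_x, k_y, γ₁, γ₂ be reals satisfying the dispersion relation k_x·k_y = Γ²·sinh²γ₁ − Γ⁻²·sinh²γ₂. Set f(x,y,n₁,n₂) = f₀ + k_x·x + k_y·y + γ₁·n₁ + γ₂·n₂. Then the one-soliton function u(x,y,n₁,n₂) = φ(x,y,n₁,n₂) + ln(1 + e^{2f(x,y,n₁,n₂)}) satisfies the (2+2)-dimensional Toda lattice equation: for all x,y ∈ ℝ and n₁,n₂ ∈ ℤ, the mixed second partial derivative ∂²u/∂x∂y equals exp(Δ₁u) − exp(Δ₂u). -/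
noncomputable section

/-! Since `log (1 + e^{2f}) = f + log (2 cosh f)` and the phase `f` is affine in `(x, y, n₁, n₂)`,
`∂ₓ∂_y u = 8C + kₓ k_y / cosh² f` with `C = λμ(λ²+μ²)/(λ²-μ²)²`, while
`cosh (f + γ) cosh (f - γ) = cosh² f + sinh² γ` gives
`exp (Δᵢ u) = Γ^{±2} (1 + sinh² γᵢ / cosh² f)`.
The two sides then agree because `8C = Γ² - Γ⁻²` and by the dispersion relation. -/

open Real

namespace Real

theorem one_add_exp_two_mul (t : ℝ) : 1 + exp (2 * t) = exp t * (2 * cosh t) := by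
  rw [cosh_eq, mul_div_cancel₀ _ two_ne_zero, mul_add, ← exp_add, ← exp_add, add_neg_cancel,
    exp_zero, ← two_mul, add_comm]

theorem log_one_add_exp_two_mul (t : ℝ) : log (1 + exp (2 * t)) = t + log (2 * cosh t) := by
  rw [one_add_exp_two_mul, log_mul (exp_ne_zero t) (by positivity), log_exp]

theorem hasDerivAt_log_one_add_exp_two_mul (t : ℝ) :
    HasDerivAt (fun s => log (1 + exp (2 * s))) (1 + sinh t / cosh t) t := by
  simp only [log_one_add_exp_two_mul]
  have h := ((hasDerivAt_cosh t).const_mul 2).log (by positivity)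
  refine ((hasDerivAt_id t).add h).congr_deriv ?_
  field_simp

theorem hasDerivAt_one_add_sinh_div_cosh (t : ℝ) :
    HasDerivAt (fun s => 1 + sinh s / cosh s) (1 / cosh t ^ 2) t := by
  refine (((hasDerivAt_sinh t).div (hasDerivAt_cosh t) (cosh_pos t).ne').const_add 1
    ).congr_deriv ?_
  field_simp
  linear_combination cosh_sq t

theorem cosh_add_mul_cosh_sub (x y : ℝ) :
    cosh (x + y) * cosh (x - y) = cosh x ^ 2 + sinh y ^ 2 := by
  rw [cosh_add, cosh_sub]
  linear_combination cosh x ^ 2 * cosh_sq y + sinh y ^ 2 * cosh_sq x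

theorem log_one_add_exp_two_mul_add_sub (f γ : ℝ) :
    log (1 + exp (2 * (f + γ))) - 2 * log (1 + exp (2 * f)) + log (1 + exp (2 * (f - γ)))
      = log (1 + sinh γ ^ 2 / cosh f ^ 2) := by
  have h : 1 + sinh γ ^ 2 / cosh f ^ 2
      = 2 * cosh (f + γ) * (2 * cosh (f - γ)) / (2 * cosh f) ^ 2 := by
    rw [mul_mul_mul_comm, cosh_add_mul_cosh_sub]
    field_simp
  rw [h, log_div (by positivity) (by positivity), log_mul (by positivity) (by positivity), log_pow]
  simp only [log_one_add_exp_two_mul]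
  push_cast
  ring

end Real

theorem deriv_deriv_mul_add_comp_affine {g g' g'' : ℝ → ℝ}
    (hg : ∀ t, HasDerivAt g (g' t) t) (hg' : ∀ t, HasDerivAt g' (g'' t) t)
    (c b a p q x y : ℝ) :
    deriv (fun x' => deriv (fun y' => c * x' * y' + b + g (a + p * x' + q * y')) y) x
      = c + p * q * g'' (a + p * x + q * y) := by
  have inner (x' : ℝ) :
      HasDerivAt (fun y' => c * x' * y' + b + g (a + p * x' + q * y'))
        (c * x' + q * g' (a + p * x' + q * y)) y := by
    have hlin := ((hasDerivAt_id y).const_mul q).const_add (a + p * x')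
    refine ((((hasDerivAt_id y).const_mul (c * x')).add_const b).add
      ((hg _).comp y hlin)).congr_deriv ?_
    simp only [id]
    ring
  have hlin := (((hasDerivAt_id x).const_mul p).const_add a).add_const (q * y)
  have outer := ((hasDerivAt_id x).const_mul c).add (((hg' _).comp x hlin).const_mul q)
  simp only [fun x' => (inner x').deriv]
  refine outer.deriv.trans ?_
  simp only [id]
  ring

section OneSoliton

variable (lam mu f₀ kx ky γ₁ γ₂ : ℝ)

theorem solU_eq_mul_add_log_one_add_exp (x y : ℝ) (n₁ n₂ : ℤ) :
    solU lam mu f₀ kx ky γ₁ γ₂ x y n₁ n₂ =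
      8 * (lam * mu * (lam ^ 2 + mu ^ 2) / (lam ^ 2 - mu ^ 2) ^ 2) * x * y
        + ((n₁ : ℝ) ^ 2 - (n₂ : ℝ) ^ 2) * log |(lam + mu) / (lam - mu)|
        + log (1 + exp (2 * ((f₀ + γ₁ * n₁ + γ₂ * n₂) + kx * x + ky * y))) := by
  unfold solU solPhi solF
  ring_nf

theorem deriv_deriv_solU (x y : ℝ) (n₁ n₂ : ℤ) :
    deriv (fun x' => deriv (fun y' => solU lam mu f₀ kx ky γ₁ γ₂ x' y' n₁ n₂) y) x
      = 8 * (lam * mu * (lam ^ 2 + mu ^ 2) / (lam ^ 2 - mu ^ 2) ^ 2)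
        + kx * ky / cosh (solF f₀ kx ky γ₁ γ₂ x y n₁ n₂) ^ 2 := by
  simp only [solU_eq_mul_add_log_one_add_exp]
  rw [deriv_deriv_mul_add_comp_affine hasDerivAt_log_one_add_exp_two_mul
    hasDerivAt_one_add_sinh_div_cosh]
  unfold solF
  ring_nf

theorem solU_secondDiff_fst (x y : ℝ) (n₁ n₂ : ℤ) :
    solU lam mu f₀ kx ky γ₁ γ₂ x y (n₁ + 1) n₂ - 2 * solU lam mu f₀ kx ky γ₁ γ₂ x y n₁ n₂
        + solU lam mu f₀ kx ky γ₁ γ₂ x y (n₁ - 1) n₂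
      = log (((lam + mu) / (lam - mu)) ^ 2)
        + log (1 + sinh γ₁ ^ 2 / cosh (solF f₀ kx ky γ₁ γ₂ x y n₁ n₂) ^ 2) := by
  have hsucc : solF f₀ kx ky γ₁ γ₂ x y (n₁ + 1) n₂ = solF f₀ kx ky γ₁ γ₂ x y n₁ n₂ + γ₁ := by
    unfold solF; push_cast; ring
  have hpred : solF f₀ kx ky γ₁ γ₂ x y (n₁ - 1) n₂ = solF f₀ kx ky γ₁ γ₂ x y n₁ n₂ - γ₁ := by
    unfold solF; push_cast; ring
  rw [← log_one_add_exp_two_mul_add_sub, ← hsucc, ← hpred, log_pow,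
    ← log_abs ((lam + mu) / (lam - mu))]
  unfold solU solPhi
  push_cast
  ring

theorem solU_secondDiff_snd (x y : ℝ) (n₁ n₂ : ℤ) :
    solU lam mu f₀ kx ky γ₁ γ₂ x y n₁ (n₂ + 1) - 2 * solU lam mu f₀ kx ky γ₁ γ₂ x y n₁ n₂
        + solU lam mu f₀ kx ky γ₁ γ₂ x y n₁ (n₂ - 1)
      = -log (((lam + mu) / (lam - mu)) ^ 2)
        + log (1 + sinh γ₂ ^ 2 / cosh (solF f₀ kx ky γ₁ γ₂ x y n₁ n₂) ^ 2) := by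
  have hsucc : solF f₀ kx ky γ₁ γ₂ x y n₁ (n₂ + 1) = solF f₀ kx ky γ₁ γ₂ x y n₁ n₂ + γ₂ := by
    unfold solF; push_cast; ring
  have hpred : solF f₀ kx ky γ₁ γ₂ x y n₁ (n₂ - 1) = solF f₀ kx ky γ₁ γ₂ x y n₁ n₂ - γ₂ := by
    unfold solF; push_cast; ring
  rw [← log_one_add_exp_two_mul_add_sub, ← hsucc, ← hpred, log_pow,
    ← log_abs ((lam + mu) / (lam - mu))]
  unfold solU solPhi
  push_cast
  ring

end OneSoliton

theorem eight_mul_solPhi_coeff_eq {lam mu : ℝ} (hm : lam - mu ≠ 0) (hp : lam + mu ≠ 0) :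
    8 * (lam * mu * (lam ^ 2 + mu ^ 2) / (lam ^ 2 - mu ^ 2) ^ 2)
      = ((lam + mu) / (lam - mu)) ^ 2 - ((lam + mu) / (lam - mu)) ^ (-2 : ℤ) := by
  rw [zpow_neg, zpow_ofNat, sq_sub_sq]
  field_simp
  ring

theorem one_soliton_solves_toda22
    (lam mu : ℝ) (h1 : lam ≠ mu) (h2 : lam ≠ -mu)
    (f₀ kx ky γ₁ γ₂ : ℝ)
    (hdisp : kx * ky =
      ((lam + mu) / (lam - mu)) ^ 2 * Real.sinh γ₁ ^ 2 -
        ((lam + mu) / (lam - mu)) ^ (-2 : ℤ) * Real.sinh γ₂ ^ 2) :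
    ∀ (x y : ℝ) (n₁ n₂ : ℤ),
      deriv (fun x' => deriv (fun y' => solU lam mu f₀ kx ky γ₁ γ₂ x' y' n₁ n₂) y) x =
        Real.exp (solU lam mu f₀ kx ky γ₁ γ₂ x y (n₁ + 1) n₂ -
            2 * solU lam mu f₀ kx ky γ₁ γ₂ x y n₁ n₂ +
            solU lam mu f₀ kx ky γ₁ γ₂ x y (n₁ - 1) n₂) -
          Real.exp (solU lam mu f₀ kx ky γ₁ γ₂ x y n₁ (n₂ + 1) -
            2 * solU lam mu f₀ kx ky γ₁ γ₂ x y n₁ n₂ +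
            solU lam mu f₀ kx ky γ₁ γ₂ x y n₁ (n₂ - 1)) := by
  intro x y n₁ n₂
  have hm : lam - mu ≠ 0 := sub_ne_zero.mpr h1
  have hp : lam + mu ≠ 0 := by rwa [← sub_neg_eq_add, sub_ne_zero]
  have hΓ : (lam + mu) / (lam - mu) ≠ 0 := div_ne_zero hp hm
  rw [deriv_deriv_solU, solU_secondDiff_fst, solU_secondDiff_snd, exp_add, exp_add, exp_neg,
    exp_log (by positivity), exp_log (by positivity), exp_log (by positivity),
    eight_mul_solPhi_coeff_eq hm hp, hdisp, zpow_neg, zpow_ofNat]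
  field_simp
  ring

end
end
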